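/- arXiv:1310.2973 — 3 statements merged into one kernel-verified Lean document; each statement's English description precedes it below -/
import Mathlib

section
/- Let 0 < δ ≤ δ̄ and let C : [0,1] → Matrix (Fin D) (Fin D) ℝ be continuous with δ|y|² ≤ yᵀC(t)C(t)ᵀy ≤ δ̄|y|² for all y ∈ ℝ^D and t ∈ [0,1], and set Σ(t,s) := ∫_t^s C(u)C(u)ᵀ du. There exists a constant c > 0, depending only on δ, δ̄ and D, such that for all 0 ≤ t₁ < t₂ < s ≤ 1, if L(t₁,s) and L(t₂,s) are the lower-triangular matrices with positive diagonals satisfying Σ(tᵢ,s) = L(tᵢ,s)L(tᵢ,s)ᵀ (i = 1,2), then ‖L(t₁,s) − L(t₂,s)‖_F ≤ c √(t₂−t₁), where ‖X‖_F := √(Σ_{i,j} X_{ij}²) is the Frobenius norm. -/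
noncomputable section

open Real Set Matrix

/-- `Sig C t s = ∫_t^s C(u) C(u)ᵀ du` (entrywise Bochner integral). -/
noncomputable def Sig {D : ℕ} (C : ℝ → Matrix (Fin D) (Fin D) ℝ) (t s : ℝ) :
    Matrix (Fin D) (Fin D) ℝ :=
  fun i j => ∫ u in t..s, (C u * (C u)ᵀ) i j

/-- Uniform ellipticity: `δ |y|² ≤ yᵀ C(t)C(t)ᵀ y ≤ δ' |y|²` for all `t ∈ [0,1]`. -/
def Ellip (D : ℕ) (δ δ' : ℝ) (C : ℝ → Matrix (Fin D) (Fin D) ℝ) : Prop :=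
  ∀ t ∈ Set.Icc (0:ℝ) 1, ∀ y : Fin D → ℝ,
    δ * (∑ i, y i ^ 2) ≤ (∑ i, ∑ j, y i * (C t * (C t)ᵀ) i j * y j) ∧
    (∑ i, ∑ j, y i * (C t * (C t)ᵀ) i j * y j) ≤ δ' * (∑ i, y i ^ 2)

set_option maxRecDepth 4000

lemma contEntry {D : ℕ} {C : ℝ → Matrix (Fin D) (Fin D) ℝ} (hC : Continuous C) (i j : Fin D) :
    Continuous fun u => (C u * (C u)ᵀ) i j := by
  simp only [Matrix.mul_apply, Matrix.transpose_apply]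
  refine continuous_finset_sum _ fun k _ => ?_
  exact ((continuous_apply k).comp ((continuous_apply i).comp hC)).mul
    ((continuous_apply k).comp ((continuous_apply j).comp hC))

lemma quad_Sig {D : ℕ} {C : ℝ → Matrix (Fin D) (Fin D) ℝ} (hC : Continuous C) (a b : ℝ)
    (y : Fin D → ℝ) :
    ∑ i, ∑ j, y i * Sig C a b i j * y j
      = ∫ u in a..b, ∑ i, ∑ j, y i * (C u * (C u)ᵀ) i j * y j := by
  rw [intervalIntegral.integral_finset_sum]
  · refine Finset.sum_congr rfl fun i _ => ?_
    rw [intervalIntegral.integral_finset_sum]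
    · refine Finset.sum_congr rfl fun j _ => ?_
      rw [Sig]
      rw [← intervalIntegral.integral_const_mul, ← intervalIntegral.integral_mul_const]
    · intro j _
      exact ((continuous_const.mul (contEntry hC i j)).mul continuous_const).intervalIntegrable _ _
  · intro i _
    refine (Continuous.intervalIntegrable ?_ _ _)
    exact continuous_finset_sum _ fun j _ => (continuous_const.mul (contEntry hC i j)).mul continuous_const

lemma Sig_add {D : ℕ} {C : ℝ → Matrix (Fin D) (Fin D) ℝ} (hC : Continuous C) (a b c : ℝ) :
    Sig C a b + Sig C b c = Sig C a c := by
  ext i j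
  exact intervalIntegral.integral_add_adjacent_intervals
    ((contEntry hC i j).intervalIntegrable _ _) ((contEntry hC i j).intervalIntegrable _ _)

lemma quad_cont {D : ℕ} {C : ℝ → Matrix (Fin D) (Fin D) ℝ} (hC : Continuous C) (y : Fin D → ℝ) :
    Continuous fun u => ∑ i, ∑ j, y i * (C u * (C u)ᵀ) i j * y j :=
  continuous_finset_sum _ fun i _ => continuous_finset_sum _ fun j _ =>
    (continuous_const.mul (contEntry hC i j)).mul continuous_const

lemma quad_Sig_bounds {D : ℕ} {δ δ' : ℝ} {C : ℝ → Matrix (Fin D) (Fin D) ℝ}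
    (hC : Continuous C) (hE : Ellip D δ δ' C) {a b : ℝ}
    (h0 : 0 ≤ a) (hab : a ≤ b) (hb1 : b ≤ 1) (y : Fin D → ℝ) :
    δ * (b - a) * (∑ i, y i ^ 2) ≤ ∑ i, ∑ j, y i * Sig C a b i j * y j ∧
    ∑ i, ∑ j, y i * Sig C a b i j * y j ≤ δ' * (b - a) * (∑ i, y i ^ 2) := by
  rw [quad_Sig hC]
  constructor
  · have h := intervalIntegral.integral_mono_on hab
      (intervalIntegrable_const (μ := MeasureTheory.volume) (c := δ * (∑ i, y i ^ 2)))
      (((quad_cont hC y)).intervalIntegrable a b)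
      (fun u hu => (hE u ⟨h0.trans hu.1, hu.2.trans hb1⟩ y).1)
    simpa [mul_comm, mul_left_comm, mul_assoc] using h
  · have h := intervalIntegral.integral_mono_on hab
      (((quad_cont hC y)).intervalIntegrable a b)
      (intervalIntegrable_const (μ := MeasureTheory.volume) (c := δ' * (∑ i, y i ^ 2)))
      (fun u hu => (hE u ⟨h0.trans hu.1, hu.2.trans hb1⟩ y).2)
    simpa [mul_comm, mul_left_comm, mul_assoc] using h

variable {D : ℕ}

def LowT {D : ℕ} (M : Matrix (Fin D) (Fin D) ℝ) : Prop := ∀ i j : Fin D, i < j → M i j = 0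

lemma lowT_iff {M : Matrix (Fin D) (Fin D) ℝ} :
    LowT M ↔ M.BlockTriangular OrderDual.toDual := by
  constructor
  · intro h i j hij
    exact h i j (by simpa using hij)
  · intro h i j hij
    exact h (by simpa using hij)

lemma lowT_diag_mul {P Q : Matrix (Fin D) (Fin D) ℝ} (hP : LowT P) (hQ : LowT Q) (i : Fin D) :
    (P * Q) i i = P i i * Q i i := by
  rw [Matrix.mul_apply]
  refine Finset.sum_eq_single i ?_ (by simp)
  intro k _ hk
  rcases lt_or_gt_of_ne hk with h | h
  · rw [hQ k i h, mul_zero]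
  · rw [hP i k h, zero_mul]

lemma lowT_det {P : Matrix (Fin D) (Fin D) ℝ} (hP : LowT P) : P.det = ∏ i, P i i :=
  Matrix.det_of_lowerTriangular P (lowT_iff.mp hP)

lemma lowT_isUnit {P : Matrix (Fin D) (Fin D) ℝ} (hP : LowT P) (hd : ∀ i, 0 < P i i) :
    IsUnit P.det := by
  rw [lowT_det hP]
  exact isUnit_iff_ne_zero.mpr (ne_of_gt (Finset.prod_pos fun i _ => hd i))

lemma lowT_inv {P : Matrix (Fin D) (Fin D) ℝ} (hP : LowT P) (hd : ∀ i, 0 < P i i) :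
    LowT P⁻¹ := by
  haveI := P.invertibleOfIsUnitDet (lowT_isUnit hP hd)
  exact lowT_iff.mpr (Matrix.blockTriangular_inv_of_blockTriangular (lowT_iff.mp hP))

lemma lowT_mul {P Q : Matrix (Fin D) (Fin D) ℝ} (hP : LowT P) (hQ : LowT Q) : LowT (P * Q) :=
  lowT_iff.mpr ((lowT_iff.mp hP).mul (lowT_iff.mp hQ))

lemma lowT_inv_diag {P : Matrix (Fin D) (Fin D) ℝ} (hP : LowT P) (hd : ∀ i, 0 < P i i)
    (i : Fin D) : P⁻¹ i i = (P i i)⁻¹ := by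
  have h1 : (P * P⁻¹) i i = 1 := by
    rw [Matrix.mul_nonsing_inv P (lowT_isUnit hP hd), Matrix.one_apply_eq]
  rw [lowT_diag_mul hP (lowT_inv hP hd)] at h1
  exact eq_inv_of_mul_eq_one_right h1

lemma det_one_add_psd {k : ℕ} (G : Matrix (Fin k) (Fin k) ℝ) (hsym : Gᵀ = G)
    (hpsd : ∀ y : Fin k → ℝ, 0 ≤ y ⬝ᵥ G *ᵥ y) :
    1 ≤ ((1 : Matrix (Fin k) (Fin k) ℝ) + G).det := by
  have hH : ((1 : Matrix (Fin k) (Fin k) ℝ) + G).IsHermitian := by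
    have : Gᴴ = G := by
      ext i j
      simp only [Matrix.conjTranspose_apply, star_trivial]
      exact congrFun (congrFun hsym i) j
    unfold Matrix.IsHermitian
    rw [Matrix.conjTranspose_add, this, Matrix.conjTranspose_one]
  have hev : ∀ i, (1:ℝ) ≤ hH.eigenvalues i := by
    intro i
    set v : Fin k → ℝ := ⇑(hH.eigenvectorBasis i) with hv
    have hnorm : v ⬝ᵥ v = 1 := by
      have h1 : ‖hH.eigenvectorBasis i‖ = 1 := hH.eigenvectorBasis.orthonormal.1 i
      have h2 : v ⬝ᵥ v = ‖hH.eigenvectorBasis i‖ ^ 2 := by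
        rw [EuclideanSpace.norm_eq, Real.sq_sqrt (by positivity)]
        simp only [dotProduct, sq, Real.norm_eq_abs, abs_mul_abs_self]
        rfl
      rw [h2, h1, one_pow]
    have heq := hH.eigenvalues_eq i
    rw [heq]
    have : star v = v := by funext j; simp
    rw [this]
    have hdot : v ⬝ᵥ ((1 + G) *ᵥ v) = v ⬝ᵥ v + v ⬝ᵥ (G *ᵥ v) := by
      rw [Matrix.add_mulVec, Matrix.one_mulVec, dotProduct_add]
    simp only [RCLike.re_to_real]
    rw [hdot, hnorm]
    linarith [hpsd v]
  have hdet := hH.det_eq_prod_eigenvalues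
  have h2 : ((1 : Matrix (Fin k) (Fin k) ℝ) + G).det = ∏ i, hH.eigenvalues i := by
    rw [hdet]; norm_cast
  rw [h2]
  calc (1:ℝ) = ∏ _i : Fin k, 1 := by simp
    _ ≤ ∏ i, hH.eigenvalues i :=
      Finset.prod_le_prod (fun i _ => zero_le_one) (fun i _ => hev i)

-- quadratic form helpers
lemma quad_eq (M : Matrix (Fin D) (Fin D) ℝ) (y : Fin D → ℝ) :
    ∑ i, ∑ j, y i * M i j * y j = y ⬝ᵥ M *ᵥ y := by
  simp [dotProduct, Matrix.mulVec, Finset.mul_sum, mul_assoc]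

lemma quad_one (w : Fin D → ℝ) :
    w ⬝ᵥ (1 : Matrix (Fin D) (Fin D) ℝ) *ᵥ w = ∑ k, w k ^ 2 := by
  simp [Matrix.one_mulVec, dotProduct, sq]

lemma quad_conj (P E : Matrix (Fin D) (Fin D) ℝ) (y : Fin D → ℝ) :
    y ⬝ᵥ (P * E * Pᵀ) *ᵥ y = (Pᵀ *ᵥ y) ⬝ᵥ E *ᵥ (Pᵀ *ᵥ y) := by
  rw [← Matrix.mulVec_mulVec, ← Matrix.mulVec_mulVec, Matrix.dotProduct_mulVec,
    ← Matrix.mulVec_transpose]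

lemma quad_single (M : Matrix (Fin D) (Fin D) ℝ) (i : Fin D) :
    Pi.single i (1:ℝ) ⬝ᵥ M *ᵥ Pi.single i (1:ℝ) = M i i := by
  simp [dotProduct, Matrix.mulVec, Pi.single_apply]

lemma sumsq_single (i : Fin D) :
    ∑ a, (Pi.single (M := fun _ : Fin D => ℝ) i 1) a ^ 2 = 1 := by
  simp [Pi.single_apply, sq]

lemma sum_fin_castLE {k : ℕ} (hk : k ≤ D) (f : Fin D → ℝ)
    (hf : ∀ c : Fin D, k ≤ (c : ℕ) → f c = 0) :
    ∑ c, f c = ∑ c : Fin k, f (Fin.castLE hk c) := by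
  have h1 : ∑ c : Fin k, f (Fin.castLE hk c) = ∑ c ∈ Finset.univ.map (Fin.castLEEmb hk), f c := by
    rw [Finset.sum_map]
    rfl
  rw [h1]
  symm
  apply Finset.sum_subset (Finset.subset_univ _)
  intro x _ hx
  apply hf
  by_contra h
  push_neg at h
  exact hx (Finset.mem_map.mpr ⟨⟨(x : ℕ), h⟩, Finset.mem_univ _, by
    apply Fin.ext
    simp [Fin.castLEEmb]⟩)

lemma one_sub_inv_pow_le {g : ℝ} (hg : 0 ≤ g) (m : ℕ) :
    1 - ((1 + g) ^ m)⁻¹ ≤ m * g := by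
  induction m with
  | zero => simp
  | succ n ih =>
    have h1 : (0:ℝ) < 1 + g := by linarith
    have h2 : (0:ℝ) < (1 + g) ^ n := pow_pos h1 n
    have hx1 : ((1 + g) ^ n)⁻¹ ≤ 1 := by
      rw [inv_le_one_iff₀]; right; exact one_le_pow₀ (by linarith)
    have hz : (1 + g)⁻¹ * (1 + g) = 1 := inv_mul_cancel₀ (ne_of_gt h1)
    have hz1 : (1 + g)⁻¹ ≤ 1 := by rw [inv_le_one_iff₀]; right; linarith
    have hz0 : (0:ℝ) < (1 + g)⁻¹ := inv_pos.mpr h1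
    have hx0 : (0:ℝ) < ((1 + g) ^ n)⁻¹ := inv_pos.mpr h2
    have hkey : ((1 + g) ^ (n + 1))⁻¹ = ((1 + g) ^ n)⁻¹ * (1 + g)⁻¹ := by
      rw [pow_succ, mul_inv]
    rw [hkey]
    push_cast
    nlinarith [mul_pos hx0 hz0, mul_le_one₀ hx1 hz0.le hz1,
      mul_nonneg (mul_nonneg hx0.le hz0.le) hg]



lemma minor_prod_ge_one {W G : Matrix (Fin D) (Fin D) ℝ}
    (hWl : LowT W) (hWd : ∀ i, 0 < W i i)
    (hWWt : W * Wᵀ = 1 + G) (hGsym : Gᵀ = G)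
    (hGpsd : ∀ y : Fin D → ℝ, 0 ≤ y ⬝ᵥ G *ᵥ y)
    {k : ℕ} (hk : k ≤ D) :
    1 ≤ ∏ c : Fin k, W (Fin.castLE hk c) (Fin.castLE hk c) := by
  have hW'l : LowT (W.submatrix (Fin.castLE hk) (Fin.castLE hk)) := by
    intro i j hij
    apply hWl
    rw [Fin.lt_def, Fin.coe_castLE, Fin.coe_castLE]
    exact hij
  have hsub : W.submatrix (Fin.castLE hk) (Fin.castLE hk)
      * (W.submatrix (Fin.castLE hk) (Fin.castLE hk))ᵀ
      = 1 + G.submatrix (Fin.castLE hk) (Fin.castLE hk) := by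
    ext a b
    have h1 : (W.submatrix (Fin.castLE hk) (Fin.castLE hk)
        * (W.submatrix (Fin.castLE hk) (Fin.castLE hk))ᵀ) a b
        = ∑ c : Fin k, W (Fin.castLE hk a) (Fin.castLE hk c)
            * W (Fin.castLE hk b) (Fin.castLE hk c) := by
      simp [Matrix.mul_apply, Matrix.transpose_apply, Matrix.submatrix_apply]
    have h2 : ∑ c : Fin D, W (Fin.castLE hk a) c * W (Fin.castLE hk b) c
        = ∑ c : Fin k, W (Fin.castLE hk a) (Fin.castLE hk c)
            * W (Fin.castLE hk b) (Fin.castLE hk c) := by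
      apply sum_fin_castLE hk
      intro c hc
      have : Fin.castLE hk a < c := by
        rw [Fin.lt_def]
        exact lt_of_lt_of_le a.isLt hc
      rw [hWl _ _ this, zero_mul]
    have h3 : (W * Wᵀ) (Fin.castLE hk a) (Fin.castLE hk b)
        = ∑ c : Fin D, W (Fin.castLE hk a) c * W (Fin.castLE hk b) c := by
      simp [Matrix.mul_apply, Matrix.transpose_apply]
    have h4 := congrFun (congrFun hWWt (Fin.castLE hk a)) (Fin.castLE hk b)
    rw [h1, ← h2, ← h3, h4]
    simp only [Matrix.add_apply, Matrix.one_apply, Matrix.submatrix_apply]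
    congr 1
    simp [Fin.castLE_inj]
  have hG'sym : (G.submatrix (Fin.castLE hk) (Fin.castLE hk))ᵀ
      = G.submatrix (Fin.castLE hk) (Fin.castLE hk) := by
    ext a b
    simpa [Matrix.transpose_apply] using congrFun (congrFun hGsym _) _
  have hG'psd : ∀ y' : Fin k → ℝ,
      0 ≤ y' ⬝ᵥ (G.submatrix (Fin.castLE hk) (Fin.castLE hk)) *ᵥ y' := by
    intro y'
    set y : Fin D → ℝ := fun c => if h : (c : ℕ) < k then y' ⟨(c : ℕ), h⟩ else 0 with hy
    have hy0 : ∀ c : Fin D, k ≤ (c : ℕ) → y c = 0 := by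
      intro c hc
      simp [hy, Nat.not_lt.mpr hc]
    have hyc : ∀ a : Fin k, y (Fin.castLE hk a) = y' a := by
      intro a
      simp [hy, a.isLt]
    have key : y ⬝ᵥ G *ᵥ y = y' ⬝ᵥ (G.submatrix (Fin.castLE hk) (Fin.castLE hk)) *ᵥ y' := by
      rw [← quad_eq, ← quad_eq]
      rw [sum_fin_castLE hk _ (fun c hc => by
        rw [hy0 c hc]
        simp)]
      refine Finset.sum_congr rfl fun a _ => ?_
      rw [sum_fin_castLE hk _ (fun c hc => by
        rw [hy0 c hc, mul_zero])]
      refine Finset.sum_congr rfl fun b _ => ?_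
      rw [hyc, hyc]
      rfl
    rw [← key]
    exact hGpsd y
  have hdet1 : 1 ≤ ((1 : Matrix (Fin k) (Fin k) ℝ)
      + G.submatrix (Fin.castLE hk) (Fin.castLE hk)).det :=
    det_one_add_psd _ hG'sym hG'psd
  have hdet2 : ((1 : Matrix (Fin k) (Fin k) ℝ)
      + G.submatrix (Fin.castLE hk) (Fin.castLE hk)).det
      = (∏ c, (W.submatrix (Fin.castLE hk) (Fin.castLE hk)) c c) ^ 2 := by
    rw [← hsub, Matrix.det_mul, Matrix.det_transpose, lowT_det hW'l, sq]
  have hpos : 0 < ∏ c, (W.submatrix (Fin.castLE hk) (Fin.castLE hk)) c c :=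
    Finset.prod_pos fun c _ => hWd _
  have hfin : 1 ≤ ∏ c, (W.submatrix (Fin.castLE hk) (Fin.castLE hk)) c c := by
    nlinarith [hdet2 ▸ hdet1]
  simpa [Matrix.submatrix_apply] using hfin


lemma cholesky_perturb {D : ℕ} {β β' ε : ℝ} (hβ : 0 < β) (hε : 0 ≤ ε)
    (E B L₁ L₂ : Matrix (Fin D) (Fin D) ℝ)
    (h1lt : LowT L₁) (h1d : ∀ i, 0 < L₁ i i) (hA : E + B = L₁ * L₁ᵀ)
    (h2lt : LowT L₂) (h2d : ∀ i, 0 < L₂ i i) (hB : B = L₂ * L₂ᵀ)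
    (hEsym : Eᵀ = E)
    (hBlo : ∀ y : Fin D → ℝ, β * ∑ i, y i ^ 2 ≤ y ⬝ᵥ B *ᵥ y)
    (hBhi : ∀ y : Fin D → ℝ, y ⬝ᵥ B *ᵥ y ≤ β' * ∑ i, y i ^ 2)
    (hE0 : ∀ y : Fin D → ℝ, 0 ≤ y ⬝ᵥ E *ᵥ y)
    (hEhi : ∀ y : Fin D → ℝ, y ⬝ᵥ E *ᵥ y ≤ ε * ∑ i, y i ^ 2) :
    ∑ i, ∑ j, (L₁ i j - L₂ i j) ^ 2
      ≤ (D * β') * (D * ((1 + 2 * D) * (ε / β))) := by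
  have hgb0 : 0 ≤ ε / β := div_nonneg hε hβ.le
  have hu : IsUnit L₂.det := lowT_isUnit h2lt h2d
  have hNL : L₂⁻¹ * L₂ = 1 := Matrix.nonsing_inv_mul _ hu
  have hLN : L₂ * L₂⁻¹ = 1 := Matrix.mul_nonsing_inv _ hu
  have hNl : LowT L₂⁻¹ := lowT_inv h2lt h2d
  obtain ⟨W, hWdef⟩ : ∃ W, W = L₂⁻¹ * L₁ := ⟨_, rfl⟩
  obtain ⟨G, hGdef⟩ : ∃ G, G = L₂⁻¹ * E * (L₂⁻¹)ᵀ := ⟨_, rfl⟩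
  have hWl : LowT W := hWdef ▸ lowT_mul hNl h1lt
  have hWdpos : ∀ i, 0 < W i i := by
    intro i
    rw [hWdef, lowT_diag_mul hNl h1lt, lowT_inv_diag h2lt h2d]
    exact mul_pos (inv_pos.mpr (h2d i)) (h1d i)
  have hBconj : L₂⁻¹ * B * (L₂⁻¹)ᵀ = 1 := by
    rw [hB]
    calc L₂⁻¹ * (L₂ * L₂ᵀ) * (L₂⁻¹)ᵀ = (L₂⁻¹ * L₂) * (L₂ᵀ * (L₂⁻¹)ᵀ) := by
          simp only [Matrix.mul_assoc]
      _ = (L₂⁻¹ * L₂) * (L₂⁻¹ * L₂)ᵀ := by rw [Matrix.transpose_mul]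
      _ = 1 := by rw [hNL]; simp
  have hWWt : W * Wᵀ = 1 + G := by
    rw [hWdef, hGdef]
    have h1 : (L₂⁻¹ * L₁) * (L₂⁻¹ * L₁)ᵀ = L₂⁻¹ * (L₁ * L₁ᵀ) * (L₂⁻¹)ᵀ := by
      rw [Matrix.transpose_mul]
      simp only [Matrix.mul_assoc]
    rw [h1, ← hA, Matrix.mul_add, Matrix.add_mul, hBconj, add_comm]
  have hGsym : Gᵀ = G := by
    rw [hGdef, Matrix.transpose_mul, Matrix.transpose_mul, Matrix.transpose_transpose,
      hEsym, Matrix.mul_assoc]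
  have hGquad : ∀ y, y ⬝ᵥ G *ᵥ y = ((L₂⁻¹)ᵀ *ᵥ y) ⬝ᵥ E *ᵥ ((L₂⁻¹)ᵀ *ᵥ y) := by
    intro y
    rw [hGdef]
    exact quad_conj _ _ y
  have hGpsd : ∀ y, 0 ≤ y ⬝ᵥ G *ᵥ y := fun y => (hGquad y) ▸ hE0 _
  have hNrow : ∀ y : Fin D → ℝ, ∑ k, ((L₂⁻¹)ᵀ *ᵥ y) k ^ 2 ≤ (∑ i, y i ^ 2) / β := by
    intro y
    have h1 := hBlo ((L₂⁻¹)ᵀ *ᵥ y)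
    have h2 : ((L₂⁻¹)ᵀ *ᵥ y) ⬝ᵥ B *ᵥ ((L₂⁻¹)ᵀ *ᵥ y) = ∑ i, y i ^ 2 := by
      rw [← quad_conj, hBconj, quad_one]
    rw [h2] at h1
    rw [le_div_iff₀ hβ]
    linarith [h1]
  have hGii_le : ∀ i, G i i ≤ ε / β := by
    intro i
    rw [← quad_single G i, hGquad]
    have h1 := hEhi ((L₂⁻¹)ᵀ *ᵥ (Pi.single i 1))
    have h2 := hNrow (Pi.single i 1)
    rw [sumsq_single] at h2
    calc ((L₂⁻¹)ᵀ *ᵥ (Pi.single i 1)) ⬝ᵥ E *ᵥ ((L₂⁻¹)ᵀ *ᵥ (Pi.single i 1))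
        ≤ ε * ∑ k, ((L₂⁻¹)ᵀ *ᵥ (Pi.single i 1)) k ^ 2 := h1
      _ ≤ ε * (1 / β) := mul_le_mul_of_nonneg_left (by simpa using h2) hε
      _ = ε / β := by ring
  have hGii_0 : ∀ i, 0 ≤ G i i := by
    intro i
    rw [← quad_single G i]
    exact hGpsd _
  have hrowW : ∀ i, ∑ k, W i k ^ 2 = 1 + G i i := by
    intro i
    have h := congrFun (congrFun hWWt i) i
    have h1 : (W * Wᵀ) i i = ∑ k, W i k ^ 2 := by
      simp [Matrix.mul_apply, Matrix.transpose_apply, sq]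
    rw [h1] at h
    rw [h, Matrix.add_apply, Matrix.one_apply_eq]
  have hd_sq_le : ∀ i, W i i ^ 2 ≤ 1 + ε / β := by
    intro i
    have h2 : W i i ^ 2 ≤ ∑ k, W i k ^ 2 :=
      Finset.single_le_sum (f := fun k => W i k ^ 2) (fun k _ => sq_nonneg _)
        (Finset.mem_univ i)
    calc W i i ^ 2 ≤ 1 + G i i := hrowW i ▸ h2
      _ ≤ 1 + ε / β := by linarith [hGii_le i]
  have hd_lb : ∀ i : Fin D, 1 - W i i ≤ D * (ε / β) := by
    intro i
    have hm1 : (i : ℕ) + 1 ≤ D := i.isLt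
    have hm : (i : ℕ) ≤ D := le_of_lt i.isLt
    have hp1 := minor_prod_ge_one hWl hWdpos hWWt hGsym hGpsd hm1
    have hsplit : ∏ c : Fin ((i : ℕ) + 1), W (Fin.castLE hm1 c) (Fin.castLE hm1 c)
        = (∏ c : Fin (i : ℕ), W (Fin.castLE hm c) (Fin.castLE hm c)) * W i i := by
      rw [Fin.prod_univ_castSucc]
      have e1 : ∀ c : Fin (i : ℕ), Fin.castLE hm1 c.castSucc = Fin.castLE hm c := fun c => by
        apply Fin.ext; simp
      have e2 : Fin.castLE hm1 (Fin.last (i : ℕ)) = i := by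
        apply Fin.ext; simp
      rw [e2]
      all_goals
        exact congrArg (· * W i i) (Finset.prod_congr rfl fun c _ => by rw [e1])
    have hppos : 0 < ∏ c : Fin (i : ℕ), W (Fin.castLE hm c) (Fin.castLE hm c) :=
      Finset.prod_pos fun c _ => hWdpos _
    have hpsq : (∏ c : Fin (i : ℕ), W (Fin.castLE hm c) (Fin.castLE hm c)) ^ 2
        ≤ (1 + ε / β) ^ (i : ℕ) := by
      rw [← Finset.prod_pow]
      calc ∏ c : Fin (i : ℕ), W (Fin.castLE hm c) (Fin.castLE hm c) ^ 2
          ≤ ∏ _c : Fin (i : ℕ), (1 + ε / β) :=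
            Finset.prod_le_prod (fun c _ => sq_nonneg _) (fun c _ => hd_sq_le _)
        _ = (1 + ε / β) ^ (i : ℕ) := by
            simp [Finset.prod_const]
    by_cases hcase : 1 ≤ W i i
    · have h0 : (0:ℝ) ≤ D * (ε / β) := mul_nonneg (Nat.cast_nonneg D) hgb0
      linarith
    · push_neg at hcase
      have hd0 := hWdpos i
      rw [hsplit] at hp1
      have hpow_pos : (0:ℝ) < (1 + ε / β) ^ (i : ℕ) := pow_pos (by linarith) _
      have h2 : 1 ≤ W i i ^ 2 * (1 + ε / β) ^ (i : ℕ) := by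
        nlinarith [hp1, hpsq, sq_nonneg (W i i), hppos, hd0]
      have h3 : ((1 + ε / β) ^ (i : ℕ))⁻¹ ≤ W i i ^ 2 := by
        rw [← one_div, div_le_iff₀ hpow_pos]
        linarith
      have h4 : 1 - W i i ≤ 1 - W i i ^ 2 := by nlinarith
      have h6 := one_sub_inv_pow_le hgb0 (i : ℕ)
      have h7 : ((i : ℕ) : ℝ) * (ε / β) ≤ D * (ε / β) :=
        mul_le_mul_of_nonneg_right (Nat.cast_le.mpr hm) hgb0
      linarith
  -- Frobenius bound on W - 1
  have hWfro : ∑ i, ∑ k, (W i k - (1 : Matrix (Fin D) (Fin D) ℝ) i k) ^ 2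
      ≤ D * ((1 + 2 * D) * (ε / β)) := by
    have hrow1 : ∀ i, ∑ k, (W i k - (1 : Matrix (Fin D) (Fin D) ℝ) i k) ^ 2
        = (1 + G i i) + 1 - 2 * W i i := by
      intro i
      have hexp : ∀ k, (W i k - (1 : Matrix (Fin D) (Fin D) ℝ) i k) ^ 2
          = W i k ^ 2 - 2 * (W i k * (1 : Matrix (Fin D) (Fin D) ℝ) i k)
            + ((1 : Matrix (Fin D) (Fin D) ℝ) i k) ^ 2 := fun k => by ring
      rw [Finset.sum_congr rfl fun k _ => hexp k]
      rw [Finset.sum_add_distrib, Finset.sum_sub_distrib, ← Finset.mul_sum]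
      have e1 : ∑ k, W i k * (1 : Matrix (Fin D) (Fin D) ℝ) i k = W i i := by
        simp [Matrix.one_apply]
      have e2 : ∑ k, ((1 : Matrix (Fin D) (Fin D) ℝ) i k) ^ 2 = 1 := by
        simp [Matrix.one_apply]
      rw [e1, e2, hrowW i]
      ring
    calc ∑ i, ∑ k, (W i k - (1 : Matrix (Fin D) (Fin D) ℝ) i k) ^ 2
        ≤ ∑ _i : Fin D, (1 + 2 * D) * (ε / β) := by
          refine Finset.sum_le_sum fun i _ => ?_
          rw [hrow1 i]
          have := hGii_le i
          have := hd_lb i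
          push_cast
          linarith
      _ = D * ((1 + 2 * D) * (ε / β)) := by
          simp [Finset.sum_const, nsmul_eq_mul]
  -- Cauchy–Schwarz assembly
  obtain ⟨M, hMdef⟩ : ∃ M, M = W - 1 := ⟨_, rfl⟩
  have hL1L2 : L₁ - L₂ = L₂ * M := by
    rw [hMdef, Matrix.mul_sub, Matrix.mul_one, hWdef, ← Matrix.mul_assoc, hLN, Matrix.one_mul]
  have hentry : ∀ i j, L₁ i j - L₂ i j = ∑ k, L₂ i k * M k j := by
    intro i j
    have h := congrFun (congrFun hL1L2 i) j
    simpa [Matrix.sub_apply, Matrix.mul_apply] using h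
  have hMfro : ∑ k, ∑ j, M k j ^ 2 ≤ D * ((1 + 2 * D) * (ε / β)) := by
    rw [hMdef]
    simpa [Matrix.sub_apply] using hWfro
  have hSL : ∑ i, ∑ k, L₂ i k ^ 2 ≤ D * β' := by
    have hBii : ∀ i, ∑ k, L₂ i k ^ 2 = B i i := by
      intro i
      rw [hB]
      simp [Matrix.mul_apply, Matrix.transpose_apply, sq]
    have hBii_le : ∀ i, B i i ≤ β' := by
      intro i
      have h := hBhi (Pi.single i 1)
      rw [quad_single, sumsq_single] at h
      linarith
    calc ∑ i, ∑ k, L₂ i k ^ 2 ≤ ∑ _i : Fin D, β' :=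
          Finset.sum_le_sum fun i _ => (hBii i) ▸ hBii_le i
      _ = D * β' := by simp [Finset.sum_const, nsmul_eq_mul]
  have hCS : ∑ i, ∑ j, (L₁ i j - L₂ i j) ^ 2
      ≤ (∑ i, ∑ k, L₂ i k ^ 2) * (∑ k, ∑ j, M k j ^ 2) := by
    calc ∑ i, ∑ j, (L₁ i j - L₂ i j) ^ 2
        = ∑ i, ∑ j, (∑ k, L₂ i k * M k j) ^ 2 := by
          refine Finset.sum_congr rfl fun i _ => Finset.sum_congr rfl fun j _ => ?_
          rw [hentry]
      _ ≤ ∑ i, ∑ j, (∑ k, L₂ i k ^ 2) * (∑ k, M k j ^ 2) := by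
          refine Finset.sum_le_sum fun i _ => Finset.sum_le_sum fun j _ => ?_
          exact Finset.sum_mul_sq_le_sq_mul_sq Finset.univ _ _
      _ = (∑ i, ∑ k, L₂ i k ^ 2) * (∑ j, ∑ k, M k j ^ 2) := by
          have hstep : ∀ i : Fin D, ∑ j, (∑ k, L₂ i k ^ 2) * (∑ k, M k j ^ 2)
              = (∑ k, L₂ i k ^ 2) * (∑ j, ∑ k, M k j ^ 2) := fun i => by
            rw [Finset.mul_sum]
          rw [Finset.sum_congr rfl fun i _ => hstep i, ← Finset.sum_mul]
      _ = (∑ i, ∑ k, L₂ i k ^ 2) * (∑ k, ∑ j, M k j ^ 2) := by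
          congr 1
          exact Finset.sum_comm
  have hSL0 : 0 ≤ ∑ i, ∑ k, L₂ i k ^ 2 :=
    Finset.sum_nonneg fun i _ => Finset.sum_nonneg fun k _ => sq_nonneg _
  have hX0 : (0:ℝ) ≤ D * ((1 + 2 * D) * (ε / β)) := by positivity
  calc ∑ i, ∑ j, (L₁ i j - L₂ i j) ^ 2
      ≤ (∑ i, ∑ k, L₂ i k ^ 2) * (∑ k, ∑ j, M k j ^ 2) := hCS
    _ ≤ (∑ i, ∑ k, L₂ i k ^ 2) * (D * ((1 + 2 * D) * (ε / β))) :=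
        mul_le_mul_of_nonneg_left hMfro hSL0
    _ ≤ (D * β') * (D * ((1 + 2 * D) * (ε / β))) :=
        mul_le_mul_of_nonneg_right hSL hX0

lemma Sig_symm {D : ℕ} (C : ℝ → Matrix (Fin D) (Fin D) ℝ) (a b : ℝ) :
    (Sig C a b)ᵀ = Sig C a b := by
  ext i j
  have hCsym : ∀ u : ℝ, (C u * (C u)ᵀ) j i = (C u * (C u)ᵀ) i j := by
    intro u
    simp [Matrix.mul_apply, Matrix.transpose_apply, mul_comm]
  simp only [Matrix.transpose_apply, Sig]
  exact intervalIntegral.integral_congr (fun u _ => hCsym u)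

theorem stmt4 (D : ℕ) (δ δ' : ℝ) (hδ : 0 < δ) (hδδ : δ ≤ δ') :
    ∃ c > 0, ∀ C : ℝ → Matrix (Fin D) (Fin D) ℝ, Continuous C → Ellip D δ δ' C →
      ∀ t₁ t₂ s : ℝ, 0 ≤ t₁ → t₁ < t₂ → t₂ < s → s ≤ 1 →
      ∀ L₁ L₂ : Matrix (Fin D) (Fin D) ℝ,
        (∀ i j : Fin D, i < j → L₁ i j = 0) → (∀ i, 0 < L₁ i i) → Sig C t₁ s = L₁ * L₁ᵀ →
        (∀ i j : Fin D, i < j → L₂ i j = 0) → (∀ i, 0 < L₂ i i) → Sig C t₂ s = L₂ * L₂ᵀ →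
        Real.sqrt (∑ i, ∑ j, (L₁ i j - L₂ i j) ^ 2) ≤ c * Real.sqrt (t₂ - t₁) := by
  have hδ'0 : 0 < δ' := lt_of_lt_of_le hδ hδδ
  refine ⟨Real.sqrt ((D:ℝ)^2 * (1 + 2*D) * δ'^2 / δ) + 1, by positivity, ?_⟩
  intro C hC hE t₁ t₂ s ht₁ h12 h2s hs1 L₁ L₂ h1lt h1d hA h2lt h2d hB
  have ht₂0 : (0:ℝ) ≤ t₂ := le_trans ht₁ h12.le
  have hst₂ : 0 < s - t₂ := by linarith
  have ht21 : 0 < t₂ - t₁ := by linarith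
  have ht₂1 : t₂ ≤ 1 := le_trans h2s.le hs1
  have hsub : Sig C t₁ t₂ + Sig C t₂ s = Sig C t₁ s := Sig_add hC t₁ t₂ s
  have hBb := fun y => quad_Sig_bounds hC hE (a := t₂) (b := s) ht₂0 h2s.le hs1 y
  have hEb := fun y => quad_Sig_bounds hC hE (a := t₁) (b := t₂) ht₁ h12.le ht₂1 y
  have key := cholesky_perturb (β := δ * (s - t₂)) (β' := δ' * (s - t₂))
      (ε := δ' * (t₂ - t₁))
      (mul_pos hδ hst₂) (by positivity)
      (Sig C t₁ t₂) (Sig C t₂ s) L₁ L₂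
      h1lt h1d (by rw [hsub, hA]) h2lt h2d hB (Sig_symm C t₁ t₂)
      (fun y => by rw [← quad_eq]; exact (hBb y).1)
      (fun y => by rw [← quad_eq]; exact (hBb y).2)
      (fun y => by
        rw [← quad_eq]
        have h := (hEb y).1
        have h0 : 0 ≤ δ * (t₂ - t₁) * (∑ i, y i ^ 2) := by positivity
        linarith)
      (fun y => by rw [← quad_eq]; exact (hEb y).2)
  have hRHS : ((D:ℝ) * (δ' * (s - t₂)))
      * ((D:ℝ) * ((1 + 2 * (D:ℝ)) * ((δ' * (t₂ - t₁)) / (δ * (s - t₂)))))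
      = ((D:ℝ)^2 * (1 + 2*D) * δ'^2 / δ) * (t₂ - t₁) := by
    field_simp
  rw [hRHS] at key
  have hF0 : 0 ≤ ∑ i, ∑ j, (L₁ i j - L₂ i j) ^ 2 :=
    Finset.sum_nonneg fun i _ => Finset.sum_nonneg fun j _ => sq_nonneg _
  have hK0 : (0:ℝ) ≤ (D:ℝ)^2 * (1 + 2*D) * δ'^2 / δ := by positivity
  calc Real.sqrt (∑ i, ∑ j, (L₁ i j - L₂ i j) ^ 2)
      ≤ Real.sqrt (((D:ℝ)^2 * (1 + 2*D) * δ'^2 / δ) * (t₂ - t₁)) := Real.sqrt_le_sqrt key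
    _ = Real.sqrt ((D:ℝ)^2 * (1 + 2*D) * δ'^2 / δ) * Real.sqrt (t₂ - t₁) :=
        Real.sqrt_mul hK0 _
    _ ≤ (Real.sqrt ((D:ℝ)^2 * (1 + 2*D) * δ'^2 / δ) + 1) * Real.sqrt (t₂ - t₁) := by
        have := Real.sqrt_nonneg (t₂ - t₁)
        nlinarith
end
end

section
/- Let 0 < δ ≤ δ̄ and let C : [0,1] → Matrix (Fin D) (Fin D) ℝ be continuously differentiable (or continuous) with δ|y|² ≤ yᵀC(t)C(t)ᵀy ≤ δ̄|y|² for all y ∈ ℝ^D and t ∈ [0,1], and set Σ(t,s) := ∫_t^s C(u)C(u)ᵀ du. There exists a constant c > 0, depending only on δ, δ̄ and D, such that for every i ∈ {1,…,D} and all 0 ≤ t₁ < t₂ < s ≤ 1: | √((Σ(t₁,s)⁻¹)_{ii}) − √((Σ(t₂,s)⁻¹)_{ii}) | ≤ c · min{ 1/√(s−t₂), (t₂−t₁)/(s−t₂)^{3/2} }. -/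
noncomputable section

open Real Set Matrix

namespace Stmt5Aux
variable {D : ℕ}

lemma dot_eq (M : Matrix (Fin D) (Fin D) ℝ) (y : Fin D → ℝ) :
    y ⬝ᵥ M *ᵥ y = ∑ i, ∑ j, y i * M i j * y j := by
  simp [dotProduct, Matrix.mulVec, Finset.mul_sum, mul_assoc]

lemma symm_dot {A : Matrix (Fin D) (Fin D) ℝ} (hA : Aᵀ = A) (v w : Fin D → ℝ) :
    v ⬝ᵥ A *ᵥ w = w ⬝ᵥ A *ᵥ v := by
  rw [Matrix.dotProduct_mulVec, ← Matrix.mulVec_transpose, hA, dotProduct_comm]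

lemma sum_single_sq (i : Fin D) :
    ∑ j, (Pi.single (M := fun _ : Fin D => ℝ) i 1) j ^ 2 = 1 := by
  have h : ∀ j, (Pi.single (M := fun _ : Fin D => ℝ) i 1) j ^ 2
      = if j = i then 1 else 0 := by
    intro j
    by_cases hj : j = i <;> simp [Pi.single_apply, hj]
  simp [h]

lemma diag_bounds {A : Matrix (Fin D) (Fin D) ℝ} (hA : Aᵀ = A)
    {lam mu : ℝ} (hlam : 0 < lam)
    (hlow : ∀ y : Fin D → ℝ, lam * ∑ j, y j ^ 2 ≤ y ⬝ᵥ A *ᵥ y)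
    (hup : ∀ y : Fin D → ℝ, y ⬝ᵥ A *ᵥ y ≤ mu * ∑ j, y j ^ 2) (i : Fin D) :
    1 / mu ≤ A⁻¹ i i ∧ A⁻¹ i i ≤ 1 / lam ∧
      (∑ j, (A⁻¹ *ᵥ Pi.single i (1:ℝ)) j ^ 2 ≤ (1 / lam) ^ 2) ∧
      A *ᵥ (A⁻¹ *ᵥ Pi.single i (1:ℝ)) = Pi.single i (1:ℝ) := by
  classical
  have hherm : A.IsHermitian := by
    show Aᴴ = A
    ext j k
    have := congrFun (congrFun hA j) k
    simpa [Matrix.conjTranspose_apply, Matrix.transpose_apply] using this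
  have hpos : A.PosDef := by
    refine Matrix.PosDef.of_dotProduct_mulVec_pos hherm fun z hz => ?_
    have hzsum : 0 < ∑ j, z j ^ 2 := by
      obtain ⟨j, hj⟩ := Function.ne_iff.mp hz
      exact Finset.sum_pos' (fun _ _ => sq_nonneg _)
        ⟨j, Finset.mem_univ j, lt_of_le_of_ne (sq_nonneg _) (Ne.symm (pow_ne_zero 2 hj))⟩
    have h1 := hlow z
    have : 0 < z ⬝ᵥ A *ᵥ z := lt_of_lt_of_le (mul_pos hlam hzsum) h1
    simpa using this
  have hdet : IsUnit A.det := isUnit_iff_ne_zero.mpr hpos.det_pos.ne'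
  set e : Fin D → ℝ := Pi.single i (1:ℝ) with he
  set x : Fin D → ℝ := A⁻¹ *ᵥ e with hx
  have hAx : A *ᵥ x = e := by
    rw [hx, Matrix.mulVec_mulVec, Matrix.mul_nonsing_inv _ hdet, Matrix.one_mulVec]
  have hxi : x i = A⁻¹ i i := by
    rw [hx, he]; simp
  have hq : x ⬝ᵥ A *ᵥ x = x i := by
    rw [hAx, he, dotProduct_single, mul_one]
  have hee : e ⬝ᵥ e = 1 := by
    simp [he]
  have hsum_e : ∑ j, e j ^ 2 = 1 := sum_single_sq i
  have hAii : e ⬝ᵥ A *ᵥ e = A i i := by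
    simp [he, single_dotProduct]
  have hAii_le : A i i ≤ mu := by
    have := hup e; rw [hAii, hsum_e, mul_one] at this; exact this
  have hAii_ge : lam ≤ A i i := by
    have := hlow e; rw [hAii, hsum_e, mul_one] at this; exact this
  have hmu : 0 < mu := lt_of_lt_of_le hlam (le_trans hAii_ge hAii_le)
  have hlx := hlow x
  have hxnn : 0 ≤ ∑ j, x j ^ 2 := Finset.sum_nonneg fun _ _ => sq_nonneg _
  have hnorm : lam * ∑ j, x j ^ 2 ≤ x i := by rw [← hq]; exact hlx
  have hxi_nonneg : 0 ≤ x i := le_trans (mul_nonneg hlam.le hxnn) hnorm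
  have hxi2 : x i ^ 2 ≤ ∑ j, x j ^ 2 :=
    Finset.single_le_sum (f := fun j => x j ^ 2) (fun _ _ => sq_nonneg _)
      (Finset.mem_univ i)
  have hup_xi : x i ≤ 1 / lam := by
    rw [le_div_iff₀ hlam]
    rcases eq_or_lt_of_le hxi_nonneg with h0 | h0
    · rw [← h0]; norm_num
    · nlinarith [hnorm, hxi2, hlam]
  have hnormb : ∑ j, x j ^ 2 ≤ (1 / lam) ^ 2 := by
    have h1 : ∑ j, x j ^ 2 ≤ x i / lam := by
      rw [le_div_iff₀ hlam]; linarith [hnorm]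
    calc ∑ j, x j ^ 2 ≤ x i / lam := h1
      _ ≤ (1 / lam) / lam := by gcongr
      _ = (1 / lam) ^ 2 := by field_simp
  have hlow_xi : 1 / mu ≤ x i := by
    set z : Fin D → ℝ := e - mu • x with hz
    have hz_nonneg : 0 ≤ z ⬝ᵥ A *ᵥ z :=
      le_trans (mul_nonneg hlam.le (Finset.sum_nonneg fun _ _ => sq_nonneg _)) (hlow z)
    have hexp : z ⬝ᵥ A *ᵥ z =
        (e ⬝ᵥ A *ᵥ e) - mu * (e ⬝ᵥ A *ᵥ x) - mu * (x ⬝ᵥ A *ᵥ e)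
          + mu ^ 2 * (x ⬝ᵥ A *ᵥ x) := by
      rw [hz]
      rw [Matrix.mulVec_sub, Matrix.mulVec_smul, sub_dotProduct,
        dotProduct_sub, dotProduct_sub,
        smul_dotProduct, dotProduct_smul, dotProduct_smul,
        smul_dotProduct]
      simp only [smul_eq_mul]
      ring
    have h1 : e ⬝ᵥ A *ᵥ x = 1 := by rw [hAx, hee]
    have h2 : x ⬝ᵥ A *ᵥ e = 1 := by rw [symm_dot hA]; exact h1
    rw [hexp, hAii, h1, h2, hq] at hz_nonneg
    rw [div_le_iff₀ hmu]
    nlinarith [hz_nonneg, hAii_le, hmu]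
  exact ⟨hxi ▸ hlow_xi, hxi ▸ hup_xi, hnormb, hAx⟩

variable {C : ℝ → Matrix (Fin D) (Fin D) ℝ}

lemma ent_cont (hC : Continuous C) (i j : Fin D) :
    Continuous fun u => (C u * (C u)ᵀ) i j :=
  (hC.matrix_mul hC.matrix_transpose).matrix_elem i j

lemma Sig_symm (hC : Continuous C) (t s : ℝ) : (Sig C t s)ᵀ = Sig C t s := by
  ext j k
  have h : ∀ u, (C u * (C u)ᵀ) k j = (C u * (C u)ᵀ) j k := by
    intro u
    simp [Matrix.mul_apply, Matrix.transpose_apply, mul_comm]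
  simp only [Matrix.transpose_apply, Sig]
  exact intervalIntegral.integral_congr fun u _ => h u

lemma Sig_add (hC : Continuous C) (t₁ t₂ s : ℝ) :
    Sig C t₁ s = Sig C t₁ t₂ + Sig C t₂ s := by
  ext j k
  have h := intervalIntegral.integral_add_adjacent_intervals
    (a := t₁) (b := t₂) (c := s) (μ := MeasureTheory.volume)
    (f := fun u => (C u * (C u)ᵀ) j k)
    ((ent_cont hC j k).intervalIntegrable _ _)
    ((ent_cont hC j k).intervalIntegrable _ _)
  simpa [Sig, Matrix.add_apply] using h.symm

lemma Sig_quad (hC : Continuous C) (t s : ℝ) (y : Fin D → ℝ) :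
    y ⬝ᵥ (Sig C t s) *ᵥ y = ∫ u in t..s, y ⬝ᵥ ((C u * (C u)ᵀ)) *ᵥ y := by
  have hint : ∀ (i j : Fin D),
      IntervalIntegrable (fun u => y i * (C u * (C u)ᵀ) i j * y j)
        MeasureTheory.volume t s :=
    fun i j => (((continuous_const.mul (ent_cont hC i j)).mul
      continuous_const)).intervalIntegrable _ _
  calc y ⬝ᵥ (Sig C t s) *ᵥ y = ∑ i, ∑ j, y i * (Sig C t s i j) * y j :=
        dot_eq _ _
    _ = ∑ i, ∑ j, ∫ u in t..s, y i * ((C u * (C u)ᵀ) i j) * y j := by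
        refine Finset.sum_congr rfl fun i _ => Finset.sum_congr rfl fun j _ => ?_
        show y i * (∫ u in t..s, (C u * (C u)ᵀ) i j) * y j = _
        rw [← intervalIntegral.integral_const_mul, ← intervalIntegral.integral_mul_const]
    _ = ∑ i, ∫ u in t..s, ∑ j, y i * ((C u * (C u)ᵀ) i j) * y j := by
        refine Finset.sum_congr rfl fun i _ => ?_
        rw [intervalIntegral.integral_finset_sum
          (f := fun j u => y i * ((C u * (C u)ᵀ) i j) * y j)
          (fun j _ => hint i j)]
    _ = ∫ u in t..s, ∑ i, ∑ j, y i * ((C u * (C u)ᵀ) i j) * y j :=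
        (intervalIntegral.integral_finset_sum
          (f := fun i u => ∑ j, y i * ((C u * (C u)ᵀ) i j) * y j)
          (fun i _ => (continuous_finset_sum _ fun j _ =>
            (continuous_const.mul (ent_cont hC i j)).mul
              continuous_const).intervalIntegrable _ _)).symm
    _ = ∫ u in t..s, y ⬝ᵥ ((C u * (C u)ᵀ)) *ᵥ y :=
        intervalIntegral.integral_congr fun u _ => (dot_eq _ _).symm

lemma Sig_quad_bounds {δ δ' : ℝ} (hC : Continuous C) (hE : Ellip D δ δ' C)
    (t s : ℝ) (h0 : 0 ≤ t) (hts : t ≤ s) (hs1 : s ≤ 1) (y : Fin D → ℝ) :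
    δ * (s - t) * (∑ j, y j ^ 2) ≤ y ⬝ᵥ (Sig C t s) *ᵥ y ∧
      y ⬝ᵥ (Sig C t s) *ᵥ y ≤ δ' * (s - t) * (∑ j, y j ^ 2) := by
  have hg : Continuous fun u => y ⬝ᵥ ((C u * (C u)ᵀ)) *ᵥ y := by
    have h : (fun u => y ⬝ᵥ ((C u * (C u)ᵀ)) *ᵥ y)
        = fun u => ∑ i, ∑ j, y i * (C u * (C u)ᵀ) i j * y j := by
      funext u; exact dot_eq _ _
    rw [h]
    exact continuous_finset_sum _ fun i _ => continuous_finset_sum _ fun j _ =>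
      (continuous_const.mul (ent_cont hC i j)).mul continuous_const
  have hgi : IntervalIntegrable (fun u => y ⬝ᵥ ((C u * (C u)ᵀ)) *ᵥ y)
      MeasureTheory.volume t s := hg.intervalIntegrable _ _
  have hmem : ∀ u ∈ Icc t s, u ∈ Icc (0:ℝ) 1 := fun u hu =>
    ⟨le_trans h0 hu.1, le_trans hu.2 hs1⟩
  rw [Sig_quad hC]
  constructor
  · have h1 : (∫ u in t..s, δ * ∑ j, y j ^ 2) ≤
        ∫ u in t..s, y ⬝ᵥ ((C u * (C u)ᵀ)) *ᵥ y := by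
      apply intervalIntegral.integral_mono_on hts (intervalIntegrable_const) hgi
      intro u hu
      have h2 := (hE u (hmem u hu) y).1
      rw [dot_eq]
      exact h2
    calc δ * (s - t) * (∑ j, y j ^ 2) = ∫ u in t..s, δ * ∑ j, y j ^ 2 := by
          rw [intervalIntegral.integral_const, smul_eq_mul]; ring
      _ ≤ _ := h1
  · have h1 : (∫ u in t..s, y ⬝ᵥ ((C u * (C u)ᵀ)) *ᵥ y) ≤
        ∫ u in t..s, δ' * ∑ j, y j ^ 2 := by
      apply intervalIntegral.integral_mono_on hts hgi (intervalIntegrable_const)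
      intro u hu
      have h2 := (hE u (hmem u hu) y).2
      rw [dot_eq]
      exact h2
    calc (∫ u in t..s, y ⬝ᵥ ((C u * (C u)ᵀ)) *ᵥ y)
        ≤ ∫ u in t..s, δ' * ∑ j, y j ^ 2 := h1
      _ = δ' * (s - t) * (∑ j, y j ^ 2) := by
          rw [intervalIntegral.integral_const, smul_eq_mul]; ring

lemma final_arith {δ δ' τ Δ a b : ℝ} (hδ : 0 < δ) (hδδ : δ ≤ δ')
    (hτ : 0 < τ) (hΔ : 0 < Δ)
    (ha0 : 0 ≤ a) (hb_low : 1 / (δ' * τ) ≤ b)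
    (ha_up : a ≤ 1 / (δ * τ)) (hb_up : b ≤ 1 / (δ * τ))
    (hab : |a - b| ≤ δ' * Δ / (δ * τ) ^ 2) :
    |Real.sqrt a - Real.sqrt b| ≤
      (2 / Real.sqrt δ + δ' * Real.sqrt δ' / δ ^ 2 + 1) *
        min (1 / Real.sqrt τ) (Δ / τ ^ ((3:ℝ)/2)) := by
  have hδ' : 0 < δ' := lt_of_lt_of_le hδ hδδ
  have hsτ : 0 < Real.sqrt τ := Real.sqrt_pos.mpr hτ
  have hsδ : 0 < Real.sqrt δ := Real.sqrt_pos.mpr hδ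
  have hsδ' : 0 < Real.sqrt δ' := Real.sqrt_pos.mpr hδ'
  have hb0 : 0 < b := lt_of_lt_of_le (by positivity) hb_low
  have hK : Real.sqrt (1 / (δ * τ)) = 1 / (Real.sqrt δ * Real.sqrt τ) := by
    rw [one_div, Real.sqrt_inv, Real.sqrt_mul hδ.le, one_div]
  have hsa : Real.sqrt a ≤ 1 / (Real.sqrt δ * Real.sqrt τ) := by
    rw [← hK]; exact Real.sqrt_le_sqrt ha_up
  have hsb : Real.sqrt b ≤ 1 / (Real.sqrt δ * Real.sqrt τ) := by
    rw [← hK]; exact Real.sqrt_le_sqrt hb_up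
  have hbound1 : |Real.sqrt a - Real.sqrt b| ≤
      (1 / Real.sqrt δ) * (1 / Real.sqrt τ) := by
    have heq : (1 : ℝ) / Real.sqrt δ * (1 / Real.sqrt τ)
        = 1 / (Real.sqrt δ * Real.sqrt τ) := one_div_mul_one_div _ _
    rw [abs_sub_le_iff]
    constructor <;>
      linarith [hsa, hsb, Real.sqrt_nonneg a, Real.sqrt_nonneg b, heq]
  have hbL : 1 / (Real.sqrt δ' * Real.sqrt τ) ≤ Real.sqrt b := by
    have h := Real.sqrt_le_sqrt hb_low
    rw [one_div, Real.sqrt_inv, Real.sqrt_mul hδ'.le] at h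
    rw [one_div]
    exact h
  have hkey : |Real.sqrt a - Real.sqrt b| * (Real.sqrt a + Real.sqrt b)
      = |a - b| := by
    have hid : (Real.sqrt a - Real.sqrt b) * (Real.sqrt a + Real.sqrt b)
        = a - b := by
      have h1 := Real.sq_sqrt ha0
      have h2 := Real.sq_sqrt hb0.le
      nlinarith [h1, h2]
    have hsum : 0 ≤ Real.sqrt a + Real.sqrt b := by positivity
    rw [← abs_of_nonneg hsum, ← abs_mul, hid]
  have hsum1 : 1 ≤ (Real.sqrt a + Real.sqrt b) * (Real.sqrt δ' * Real.sqrt τ) := by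
    have h1 : (1 / (Real.sqrt δ' * Real.sqrt τ)) * (Real.sqrt δ' * Real.sqrt τ) = 1 := by
      field_simp
    nlinarith [hbL, Real.sqrt_nonneg a, mul_pos hsδ' hsτ]
  have hbound2' : |Real.sqrt a - Real.sqrt b| ≤
      |a - b| * (Real.sqrt δ' * Real.sqrt τ) := by
    nlinarith [hkey, hsum1, abs_nonneg (Real.sqrt a - Real.sqrt b),
      mul_pos hsδ' hsτ]
  have h32 : τ ^ ((3:ℝ)/2) = τ ^ 2 / Real.sqrt τ := by
    rw [Real.sqrt_eq_rpow, ← Real.rpow_natCast τ 2, ← Real.rpow_sub hτ]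
    norm_num
  have hbound2 : |Real.sqrt a - Real.sqrt b| ≤
      (δ' * Real.sqrt δ' / δ ^ 2) * (Δ / τ ^ ((3:ℝ)/2)) := by
    have heq : (δ' * Δ / (δ * τ) ^ 2) * (Real.sqrt δ' * Real.sqrt τ)
        = (δ' * Real.sqrt δ' / δ ^ 2) * (Δ / τ ^ ((3:ℝ)/2)) := by
      rw [h32, div_div_eq_mul_div]
      field_simp
    calc |Real.sqrt a - Real.sqrt b| ≤ |a - b| * (Real.sqrt δ' * Real.sqrt τ) :=
          hbound2'
      _ ≤ (δ' * Δ / (δ * τ) ^ 2) * (Real.sqrt δ' * Real.sqrt τ) := by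
          apply mul_le_mul_of_nonneg_right hab (by positivity)
      _ = _ := heq
  set c : ℝ := 2 / Real.sqrt δ + δ' * Real.sqrt δ' / δ ^ 2 + 1 with hc
  have hu0 : 0 ≤ 1 / Real.sqrt τ := by positivity
  have hτ32 : 0 < τ ^ ((3:ℝ)/2) := Real.rpow_pos_of_pos hτ _
  have hv0 : 0 ≤ Δ / τ ^ ((3:ℝ)/2) := by positivity
  have hc1 : 1 / Real.sqrt δ ≤ c := by
    have h1 : 0 < δ' * Real.sqrt δ' / δ ^ 2 := by positivity
    have h2 : 0 < 1 / Real.sqrt δ := by positivity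
    have h3 : 2 / Real.sqrt δ = 2 * (1 / Real.sqrt δ) := by ring
    rw [hc]; linarith
  have hc2 : δ' * Real.sqrt δ' / δ ^ 2 ≤ c := by
    have h2 : 0 < 2 / Real.sqrt δ := by positivity
    rw [hc]; linarith
  rcases le_total (1 / Real.sqrt τ) (Δ / τ ^ ((3:ℝ)/2)) with h | h
  · rw [min_eq_left h]
    calc |Real.sqrt a - Real.sqrt b| ≤ (1 / Real.sqrt δ) * (1 / Real.sqrt τ) :=
          hbound1
      _ ≤ c * (1 / Real.sqrt τ) := mul_le_mul_of_nonneg_right hc1 hu0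
  · rw [min_eq_right h]
    calc |Real.sqrt a - Real.sqrt b| ≤
          (δ' * Real.sqrt δ' / δ ^ 2) * (Δ / τ ^ ((3:ℝ)/2)) := hbound2
      _ ≤ c * (Δ / τ ^ ((3:ℝ)/2)) := mul_le_mul_of_nonneg_right hc2 hv0

end Stmt5Aux

theorem stmt5 (D : ℕ) (δ δ' : ℝ) (hδ : 0 < δ) (hδδ : δ ≤ δ') :
    ∃ c > 0, ∀ C : ℝ → Matrix (Fin D) (Fin D) ℝ, Continuous C → Ellip D δ δ' C →
      ∀ i : Fin D, ∀ t₁ t₂ s : ℝ, 0 ≤ t₁ → t₁ < t₂ → t₂ < s → s ≤ 1 →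
        |Real.sqrt ((Sig C t₁ s)⁻¹ i i) - Real.sqrt ((Sig C t₂ s)⁻¹ i i)| ≤
          c * min (1 / Real.sqrt (s - t₂)) ((t₂ - t₁) / (s - t₂) ^ ((3:ℝ)/2)) := by
  classical
  have hδ' : 0 < δ' := lt_of_lt_of_le hδ hδδ
  refine ⟨2 / Real.sqrt δ + δ' * Real.sqrt δ' / δ ^ 2 + 1, by positivity, ?_⟩
  intro C hC hE i t₁ t₂ s ht₁ h12 h2s hs1
  set τ := s - t₂ with hτdef
  set Δ := t₂ - t₁ with hΔdef
  set σ := s - t₁ with hσdef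
  have hτ : 0 < τ := by simp [hτdef]; linarith
  have hΔ : 0 < Δ := by simp [hΔdef]; linarith
  have hσ : 0 < σ := by simp [hσdef]; linarith
  have hστ : τ ≤ σ := by simp [hτdef, hσdef]; linarith
  set A := Sig C t₁ s with hAdef
  set B := Sig C t₂ s with hBdef
  set M := Sig C t₁ t₂ with hMdef
  have hAsym : Aᵀ = A := Stmt5Aux.Sig_symm hC t₁ s
  have hBsym : Bᵀ = B := Stmt5Aux.Sig_symm hC t₂ s
  have hMsym : Mᵀ = M := Stmt5Aux.Sig_symm hC t₁ t₂
  have hAq := fun y => Stmt5Aux.Sig_quad_bounds hC hE t₁ s ht₁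
    (by linarith) hs1 y
  have hBq := fun y => Stmt5Aux.Sig_quad_bounds hC hE t₂ s
    (by linarith) (by linarith) hs1 y
  have hMq := fun y => Stmt5Aux.Sig_quad_bounds hC hE t₁ t₂ ht₁
    (by linarith) (by linarith) y
  -- diagonal bounds for A
  have hlamA : 0 < δ * σ := by positivity
  have hlamB : 0 < δ * τ := by positivity
  obtain ⟨haL, haU, hxn, hAx⟩ := Stmt5Aux.diag_bounds hAsym hlamA
    (fun y => (hAq y).1) (fun y => (hAq y).2) i
  obtain ⟨hbL, hbU, hyn, hBy⟩ := Stmt5Aux.diag_bounds hBsym hlamB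
    (fun y => (hBq y).1) (fun y => (hBq y).2) i
  set x : Fin D → ℝ := A⁻¹ *ᵥ Pi.single i (1:ℝ) with hxdef
  set yv : Fin D → ℝ := B⁻¹ *ᵥ Pi.single i (1:ℝ) with hyvdef
  set a := A⁻¹ i i with hadef
  set b := B⁻¹ i i with hbdef
  have hxa : x i = a := by
    rw [hxdef, hadef]; simp
  have hyb : yv i = b := by
    rw [hyvdef, hbdef]; simp
  -- difference identity : x ⬝ᵥ M *ᵥ yv = yv i - x i
  have hABM : A = M + B := Stmt5Aux.Sig_add hC t₁ t₂ s
  have hM_eq : M = A - B := by rw [hABM]; abel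
  have hdiff : x ⬝ᵥ M *ᵥ yv = b - a := by
    rw [hM_eq, Matrix.sub_mulVec, dotProduct_sub]
    have h1 : x ⬝ᵥ A *ᵥ yv = b := by
      rw [Stmt5Aux.symm_dot hAsym, hAx, dotProduct_single, mul_one, hyb]
    have h2 : x ⬝ᵥ B *ᵥ yv = a := by
      rw [hBy, dotProduct_single, mul_one, hxa]
    rw [h1, h2]
  -- bound on |x ⬝ᵥ M *ᵥ yv|
  have hMcross : ∀ v w : Fin D → ℝ, v ⬝ᵥ M *ᵥ w = w ⬝ᵥ M *ᵥ v :=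
    Stmt5Aux.symm_dot hMsym
  have hMexp : ∀ (c : ℝ) (v w : Fin D → ℝ),
      (v + c • w) ⬝ᵥ M *ᵥ (v + c • w) =
        v ⬝ᵥ M *ᵥ v + c * (v ⬝ᵥ M *ᵥ w) + c * (w ⬝ᵥ M *ᵥ v)
          + c ^ 2 * (w ⬝ᵥ M *ᵥ w) := by
    intro c v w
    rw [Matrix.mulVec_add, Matrix.mulVec_smul, add_dotProduct,
      dotProduct_add, dotProduct_add,
      smul_dotProduct, dotProduct_smul, dotProduct_smul,
      smul_dotProduct]
    simp only [smul_eq_mul]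
    ring
  have hMnn : ∀ z : Fin D → ℝ, 0 ≤ z ⬝ᵥ M *ᵥ z := by
    intro z
    have hs : 0 ≤ ∑ j, z j ^ 2 := Finset.sum_nonneg fun _ _ => sq_nonneg _
    have h0 : (0:ℝ) ≤ δ * (t₂ - t₁) * ∑ j, z j ^ 2 :=
      mul_nonneg (mul_nonneg hδ.le (by linarith)) hs
    exact le_trans h0 (hMq z).1
  have hMup : ∀ z : Fin D → ℝ, z ⬝ᵥ M *ᵥ z ≤ δ' * Δ * ∑ j, z j ^ 2 :=
    fun z => (hMq z).2
  have hnormx : ∑ j, x j ^ 2 ≤ (1 / (δ * τ)) ^ 2 := by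
    have h1 : (1 / (δ * σ)) ≤ 1 / (δ * τ) := by
      apply one_div_le_one_div_of_le (by positivity)
      exact mul_le_mul_of_nonneg_left hστ hδ.le
    calc ∑ j, x j ^ 2 ≤ (1 / (δ * σ)) ^ 2 := hxn
      _ ≤ (1 / (δ * τ)) ^ 2 := by gcongr <;> positivity
  have hcross : |x ⬝ᵥ M *ᵥ yv| ≤ δ' * Δ / (δ * τ) ^ 2 := by
    have hplus := hMnn (x + (1:ℝ) • yv)
    have hminus := hMnn (x + (-1:ℝ) • yv)
    rw [hMexp] at hplus hminus
    rw [hMcross yv x] at hplus hminus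
    have hQx : x ⬝ᵥ M *ᵥ x ≤ δ' * Δ * ∑ j, x j ^ 2 := hMup x
    have hQy : yv ⬝ᵥ M *ᵥ yv ≤ δ' * Δ * ∑ j, yv j ^ 2 := hMup yv
    have hbx : δ' * Δ * ∑ j, x j ^ 2 ≤ δ' * Δ * (1 / (δ * τ)) ^ 2 :=
      mul_le_mul_of_nonneg_left hnormx (by positivity)
    have hby : δ' * Δ * ∑ j, yv j ^ 2 ≤ δ' * Δ * (1 / (δ * τ)) ^ 2 :=
      mul_le_mul_of_nonneg_left hyn (by positivity)
    have hgoal : δ' * Δ / (δ * τ) ^ 2 = δ' * Δ * (1 / (δ * τ)) ^ 2 := by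
      field_simp
    set r := x ⬝ᵥ M *ᵥ yv with hrdef
    set qx := x ⬝ᵥ M *ᵥ x with hqxdef
    set qy := yv ⬝ᵥ M *ᵥ yv with hqydef
    set K := δ' * Δ * (1 / (δ * τ)) ^ 2 with hKdef
    rw [abs_le, hgoal]
    constructor <;> linarith [hplus, hminus, hQx, hQy, hbx, hby]
  have habdiff : |a - b| ≤ δ' * Δ / (δ * τ) ^ 2 := by
    rw [hdiff] at hcross
    rwa [abs_sub_comm] at hcross
  -- final arithmetic
  have ha0 : 0 ≤ a := le_trans (by positivity) haL
  have haU' : a ≤ 1 / (δ * τ) := by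
    refine le_trans haU ?_
    apply one_div_le_one_div_of_le (by positivity)
    exact mul_le_mul_of_nonneg_left hστ hδ.le
  exact Stmt5Aux.final_arith hδ hδδ hτ hΔ ha0 hbL haU' hbU habdiff
end
end

section
/- Let 0 < δ ≤ δ̄, let C : [0,1] → Matrix (Fin D) (Fin D) ℝ be continuous with δ|y|² ≤ yᵀC(t)C(t)ᵀy ≤ δ̄|y|² for all y ∈ ℝ^D, t ∈ [0,1], and set Σ(t,s) := ∫_t^s C(u)C(u)ᵀ du with Cholesky factor L(t,s) (lower triangular, positive diagonal, Σ(t,s) = L(t,s)L(t,s)ᵀ). Let T ∈ (0,1], α ∈ (0,1), and let f : [0,T]×ℝ^D → ℝ be bounded continuous with finite parabolic α-Hölder seminorm [f]_α. Then there is a constant c > 0 depending only on δ, δ̄, D, α such that for all 0 ≤ t₁ < t₂ ≤ T, every y₁ ∈ ℝ^D and every d ∈ {1,…,D}: | ∫_{t₁}^{t₂} ∫_{ℝ^D} (2π)^{−D/2} e^{−|z|²/2} (L(t₁,s)^{−T} z)_d · f(s, y₁ − L(t₁,s)z) dz ds | ≤ c [f]_α (t₂−t₁)^{(1+α)/2},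 where L^{−T} denotes the transpose of the inverse of L. -/
noncomputable section

open Real Set Matrix

/-- Euclidean norm on `ℝ^D`. -/
noncomputable def en {D : ℕ} (x : Fin D → ℝ) : ℝ := Real.sqrt (∑ i, x i ^ 2)

/-- The set of parabolic Hölder quotients of `h` on `[0,T] × ℝ^D`. -/
def psemiSet {D : ℕ} (T α : ℝ) (h : ℝ → (Fin D → ℝ) → ℝ) : Set ℝ :=
  {r | ∃ t x s y, t ∈ Set.Icc (0:ℝ) T ∧ s ∈ Set.Icc (0:ℝ) T ∧
    ((t, x) : ℝ × (Fin D → ℝ)) ≠ (s, y) ∧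
    r = |h t x - h s y| / (Real.sqrt |t - s| + en (x - y)) ^ α}

/-- `L` is the Cholesky factor of `Sig C` at `(t,s)`: lower triangular with positive
diagonal and `Σ(t,s) = L Lᵀ`. -/
def IsCholesky {D : ℕ} (C : ℝ → Matrix (Fin D) (Fin D) ℝ)
    (L : ℝ → ℝ → Matrix (Fin D) (Fin D) ℝ) : Prop :=
  ∀ t s : ℝ, 0 ≤ t → t < s → s ≤ 1 →
    (∀ i j : Fin D, i < j → L t s i j = 0) ∧ (∀ i, 0 < L t s i i) ∧
    Sig C t s = L t s * (L t s)ᵀ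
open MeasureTheory

lemma en_nonneg {D : ℕ} (x : Fin D → ℝ) : 0 ≤ en x := Real.sqrt_nonneg _

lemma en_sq {D : ℕ} (x : Fin D → ℝ) : en x ^ 2 = ∑ i, x i ^ 2 :=
  Real.sq_sqrt (Finset.sum_nonneg fun i _ => sq_nonneg _)

lemma en_neg {D : ℕ} (x : Fin D → ℝ) : en (fun i => -(x i)) = en x := by
  unfold en; congr 1; exact Finset.sum_congr rfl fun i _ => by ring

lemma abs_le_en {D : ℕ} (x : Fin D → ℝ) (d : Fin D) : |x d| ≤ en x := by
  rw [← Real.sqrt_sq_eq_abs]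
  exact Real.sqrt_le_sqrt (Finset.single_le_sum (f := fun i => x i ^ 2)
    (fun i _ => sq_nonneg _) (Finset.mem_univ d))

lemma cs {D : ℕ} (f g : Fin D → ℝ) : ∑ i, f i * g i ≤ en f * en g := by
  have h := Finset.sum_mul_sq_le_sq_mul_sq Finset.univ f g
  calc ∑ i, f i * g i ≤ |∑ i, f i * g i| := le_abs_self _
    _ = Real.sqrt ((∑ i, f i * g i) ^ 2) := (Real.sqrt_sq_eq_abs _).symm
    _ ≤ Real.sqrt ((∑ i, f i ^ 2) * ∑ i, g i ^ 2) := Real.sqrt_le_sqrt h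
    _ = en f * en g := Real.sqrt_mul (Finset.sum_nonneg fun i _ => sq_nonneg _) _

lemma en_continuous {D : ℕ} : Continuous (en (D := D)) := by
  unfold en
  exact Real.continuous_sqrt.comp (continuous_finset_sum _ fun i _ =>
    ((continuous_apply i).pow 2))

/-- nonnegativity of the sup of the Hölder quotient set -/
lemma psemi_nonneg {D : ℕ} {T α : ℝ} (hT : 0 < T) (f : ℝ → (Fin D → ℝ) → ℝ)
    (hb : BddAbove (psemiSet T α f)) : 0 ≤ sSup (psemiSet T α f) := by
  have hmem : |f 0 0 - f T 0| / (Real.sqrt |(0:ℝ) - T| + en ((0:Fin D → ℝ) - 0)) ^ α ∈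
      psemiSet T α f := by
    refine ⟨0, 0, T, 0, ⟨le_refl _, le_of_lt hT⟩, ⟨le_of_lt hT, le_refl _⟩, ?_, rfl⟩
    simp only [ne_eq, Prod.mk.injEq, not_and]
    intro h; exact absurd h (ne_of_lt hT)
  refine le_trans ?_ (le_csSup hb hmem)
  exact div_nonneg (abs_nonneg _) (Real.rpow_nonneg (add_nonneg (Real.sqrt_nonneg _) (en_nonneg _)) _)

/-- Hölder continuity in space -/
lemma holder_space {D : ℕ} {T α : ℝ} (hT : 0 < T) (hα : 0 < α)
    (f : ℝ → (Fin D → ℝ) → ℝ) (hb : BddAbove (psemiSet T α f))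
    {s : ℝ} (hs : s ∈ Set.Icc (0:ℝ) T) (x y : Fin D → ℝ) :
    |f s x - f s y| ≤ sSup (psemiSet T α f) * en (x - y) ^ α := by
  rcases eq_or_ne x y with rfl | hxy
  · simp only [sub_self, abs_zero]
    exact mul_nonneg (psemi_nonneg hT f hb) (Real.rpow_nonneg (en_nonneg _) _)
  · have hen : 0 < en (x - y) := by
      rcases Function.ne_iff.1 hxy with ⟨i, hi⟩
      have : 0 < (x - y) i ^ 2 := by
        have : (x - y) i ≠ 0 := sub_ne_zero.2 hi
        positivity
      have hsum : 0 < ∑ i, (x - y) i ^ 2 :=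
        Finset.sum_pos' (fun i _ => sq_nonneg _) ⟨i, Finset.mem_univ i, this⟩
      exact Real.sqrt_pos.2 hsum
    have hmem : |f s x - f s y| / (Real.sqrt |s - s| + en (x - y)) ^ α ∈ psemiSet T α f :=
      ⟨s, x, s, y, hs, hs, by simp [hxy], rfl⟩
    have h1 := le_csSup hb hmem
    rw [sub_self, abs_zero, Real.sqrt_zero, zero_add] at h1
    have hpow : 0 < en (x - y) ^ α := Real.rpow_pos_of_pos hen α
    calc |f s x - f s y| = |f s x - f s y| / en (x - y) ^ α * en (x - y) ^ α := by
          field_simp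
      _ ≤ sSup (psemiSet T α f) * en (x - y) ^ α :=
          mul_le_mul_of_nonneg_right h1 (le_of_lt hpow)

lemma gauss_majorant {D : ℕ} :
    Integrable (fun z : Fin D → ℝ => 5 * Real.exp (-(∑ i, z i ^ 2) / 4)) := by
  have h : ∀ z : Fin D → ℝ, Real.exp (-(∑ i, z i ^ 2) / 4)
      = ∏ i, Real.exp (-(4:ℝ)⁻¹ * z i ^ 2) := by
    intro z
    rw [← Real.exp_sum]
    congr 1
    rw [neg_div, Finset.sum_div, ← Finset.sum_neg_distrib]
    exact Finset.sum_congr rfl fun i _ => by ring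
  exact (((Integrable.fintype_prod (f := fun (_ : Fin D) (x : ℝ) =>
    Real.exp (-(4:ℝ)⁻¹ * x ^ 2)) fun _ => integrable_exp_neg_mul_sq (by norm_num)).const_mul
    5).congr (Filter.Eventually.of_forall fun z => by dsimp only; rw [h z]))

lemma rpow_le_five_exp {t β : ℝ} (ht : 0 ≤ t) (hβ0 : 0 ≤ β) (hβ1 : β ≤ 1) :
    t ^ β ≤ 5 * Real.exp (t / 4) := by
  have h1 : t ^ β ≤ 1 + t := by
    rcases le_or_gt t 1 with h | h
    · calc t ^ β ≤ 1 := Real.rpow_le_one ht h hβ0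
        _ ≤ 1 + t := by linarith
    · calc t ^ β ≤ t ^ (1:ℝ) := Real.rpow_le_rpow_of_exponent_le h.le hβ1
        _ = t := Real.rpow_one t
        _ ≤ 1 + t := by linarith
  have h2 : (1:ℝ) ≤ Real.exp (t / 4) := Real.one_le_exp (by linarith)
  have h3 : t / 4 + 1 ≤ Real.exp (t / 4) := Real.add_one_le_exp _
  nlinarith [Real.exp_pos (t / 4)]

lemma gauss_pointwise {D : ℕ} {β : ℝ} (hβ0 : 0 ≤ β) (hβ2 : β ≤ 2) (z : Fin D → ℝ) :
    Real.exp (-(∑ i, z i ^ 2) / 2) * en z ^ β ≤ 5 * Real.exp (-(∑ i, z i ^ 2) / 4) := by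
  set t := ∑ i, z i ^ 2 with ht
  have ht0 : 0 ≤ t := Finset.sum_nonneg fun i _ => sq_nonneg _
  have hen : en z ^ β = t ^ (β / 2) := by
    unfold en
    rw [← ht, Real.sqrt_eq_rpow, ← Real.rpow_mul ht0]
    congr 1
    ring
  rw [hen]
  have key : t ^ (β / 2) ≤ 5 * Real.exp (t / 4) := rpow_le_five_exp ht0 (by linarith) (by linarith)
  calc Real.exp (-t / 2) * t ^ (β / 2) ≤ Real.exp (-t / 2) * (5 * Real.exp (t / 4)) :=
        mul_le_mul_of_nonneg_left key (Real.exp_nonneg _)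
    _ = 5 * (Real.exp (-t / 2) * Real.exp (t / 4)) := by ring
    _ = 5 * Real.exp (-t / 2 + t / 4) := by rw [Real.exp_add]
    _ = 5 * Real.exp (-t / 4) := by congr 1; ring

lemma gauss_integrable {D : ℕ} {β : ℝ} (hβ0 : 0 ≤ β) (hβ2 : β ≤ 2) :
    Integrable (fun z : Fin D → ℝ => Real.exp (-(∑ i, z i ^ 2) / 2) * en z ^ β) := by
  refine gauss_majorant.mono' ?_ ?_
  · refine Continuous.aestronglyMeasurable ?_
    refine Continuous.mul ?_ ?_
    · exact Real.continuous_exp.comp (Continuous.div_const (Continuous.neg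
        (continuous_finset_sum _ fun i _ => (continuous_apply i).pow 2)) 2)
    · exact en_continuous.rpow_const fun x => Or.inr hβ0
  · refine Filter.Eventually.of_forall fun z => ?_
    rw [Real.norm_eq_abs, abs_of_nonneg (mul_nonneg (Real.exp_nonneg _)
      (Real.rpow_nonneg (en_nonneg _) _))]
    exact gauss_pointwise hβ0 hβ2 z

lemma gauss_odd {D : ℕ} (w : Fin D → ℝ) :
    ∫ z : Fin D → ℝ, Real.exp (-(∑ i, z i ^ 2) / 2) * (∑ k, w k * z k) = 0 := by
  set g := fun z : Fin D → ℝ => Real.exp (-(∑ i, z i ^ 2) / 2) * (∑ k, w k * z k) with hg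
  have h1 : ∫ z, g (-z) = ∫ z, g z := MeasureTheory.integral_neg_eq_self g _
  have h2 : ∀ z, g (-z) = -g z := by
    intro z
    simp only [hg, Pi.neg_apply]
    have : ∑ i, (-z i) ^ 2 = ∑ i, z i ^ 2 := Finset.sum_congr rfl fun i _ => by ring
    rw [this]
    have : ∑ k, w k * (-z k) = -∑ k, w k * z k := by
      rw [← Finset.sum_neg_distrib]; exact Finset.sum_congr rfl fun i _ => by ring
    rw [this]; ring
  simp only [h2, MeasureTheory.integral_neg] at h1
  linarith

/-- Quadratic form of `Sig` is bounded by ellipticity constants times `(s-t)`. -/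
lemma sig_form {D : ℕ} {δ δ' : ℝ} {C : ℝ → Matrix (Fin D) (Fin D) ℝ}
    (hC : Continuous C) (hE : Ellip D δ δ' C) {t s : ℝ}
    (h0 : 0 ≤ t) (hts : t ≤ s) (hs1 : s ≤ 1) (y : Fin D → ℝ) :
    δ * (s - t) * (∑ i, y i ^ 2) ≤ (∑ i, ∑ j, y i * Sig C t s i j * y j) ∧
    (∑ i, ∑ j, y i * Sig C t s i j * y j) ≤ δ' * (s - t) * (∑ i, y i ^ 2) := by
  have hcont : ∀ i j : Fin D, Continuous fun u => (C u * (C u)ᵀ) i j := by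
    intro i j
    simp only [Matrix.mul_apply, Matrix.transpose_apply]
    exact continuous_finset_sum _ fun k _ =>
      (((continuous_apply k).comp ((continuous_apply i).comp hC)).mul
        (((continuous_apply k).comp ((continuous_apply j).comp hC))))
  have hQcont : Continuous fun u => ∑ i, ∑ j, y i * (C u * (C u)ᵀ) i j * y j :=
    continuous_finset_sum _ fun i _ => continuous_finset_sum _ fun j _ =>
      ((continuous_const.mul (hcont i j)).mul continuous_const)
  have hform : (∑ i, ∑ j, y i * Sig C t s i j * y j)
      = ∫ u in t..s, ∑ i, ∑ j, y i * (C u * (C u)ᵀ) i j * y j := by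
    rw [intervalIntegral.integral_finset_sum]
    · refine Finset.sum_congr rfl fun i _ => ?_
      rw [intervalIntegral.integral_finset_sum]
      · refine Finset.sum_congr rfl fun j _ => ?_
        unfold Sig
        rw [← intervalIntegral.integral_const_mul, ← intervalIntegral.integral_mul_const]
      · intro j _
        exact ((continuous_const.mul (hcont i j)).mul continuous_const).intervalIntegrable t s
    · intro i _
      exact (continuous_finset_sum _ fun j _ =>
        (continuous_const.mul (hcont i j)).mul continuous_const).intervalIntegrable t s
  constructor
  · rw [hform]
    have := intervalIntegral.integral_mono_on hts
      (intervalIntegrable_const (μ := MeasureTheory.volume) (c := δ * ∑ i, y i ^ 2))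
      (hQcont.intervalIntegrable t s)
      (fun u hu => (hE u ⟨le_trans h0 hu.1, le_trans hu.2 hs1⟩ y).1)
    rwa [intervalIntegral.integral_const, smul_eq_mul, show (s - t) * (δ * ∑ i, y i ^ 2)
      = δ * (s - t) * (∑ i, y i ^ 2) by ring] at this
  · rw [hform]
    have := intervalIntegral.integral_mono_on hts
      (hQcont.intervalIntegrable t s)
      (intervalIntegrable_const (μ := MeasureTheory.volume) (c := δ' * ∑ i, y i ^ 2))
      (fun u hu => (hE u ⟨le_trans h0 hu.1, le_trans hu.2 hs1⟩ y).2)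
    rwa [intervalIntegral.integral_const, smul_eq_mul, show (s - t) * (δ' * ∑ i, y i ^ 2)
      = δ' * (s - t) * (∑ i, y i ^ 2) by ring] at this

/-- Quadratic form of `A * Aᵀ` as a sum of squares. -/
lemma quad_AAT {D : ℕ} (A : Matrix (Fin D) (Fin D) ℝ) (y : Fin D → ℝ) :
    (∑ i, ∑ j, y i * (A * Aᵀ) i j * y j) = ∑ k, (∑ i, y i * A i k) ^ 2 := by
  calc ∑ i, ∑ j, y i * (A * Aᵀ) i j * y j
      = ∑ i, ∑ j, ∑ k, y i * A i k * (y j * A j k) := by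
        refine Finset.sum_congr rfl fun i _ => Finset.sum_congr rfl fun j _ => ?_
        simp only [Matrix.mul_apply, Matrix.transpose_apply]
        rw [Finset.mul_sum, Finset.sum_mul]
        exact Finset.sum_congr rfl fun k _ => by ring
    _ = ∑ i, ∑ k, ∑ j, y i * A i k * (y j * A j k) := by
        exact Finset.sum_congr rfl fun i _ => Finset.sum_comm
    _ = ∑ k, ∑ i, ∑ j, y i * A i k * (y j * A j k) := Finset.sum_comm
    _ = ∑ k, (∑ i, y i * A i k) ^ 2 := by
        refine Finset.sum_congr rfl fun k _ => ?_
        rw [sq, Finset.sum_mul_sum]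

/-- Upper operator bound from the row form bound. -/
lemma opbound_of_rowbound {D : ℕ} {A : Matrix (Fin D) (Fin D) ℝ} {c : ℝ} (hc : 0 ≤ c)
    (hup : ∀ y : Fin D → ℝ, en (fun k => ∑ i, y i * A i k) ≤ c * en y) (z : Fin D → ℝ) :
    en (fun i => ∑ k, A i k * z k) ≤ c * en z := by
  set v : Fin D → ℝ := fun i => ∑ k, A i k * z k with hv
  rcases eq_or_lt_of_le (en_nonneg v) with h0 | h0
  · rw [← h0]; exact mul_nonneg hc (en_nonneg z)
  have key : en v ^ 2 ≤ c * en v * en z := by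
    have h1 : en v ^ 2 = ∑ k, (∑ i, v i * A i k) * z k := by
      rw [en_sq]
      calc ∑ i, v i ^ 2 = ∑ i, v i * ∑ k, A i k * z k := by
            refine Finset.sum_congr rfl fun i _ => ?_
            rw [sq]
        _ = ∑ i, ∑ k, v i * (A i k * z k) := by
            exact Finset.sum_congr rfl fun i _ => Finset.mul_sum _ _ _
        _ = ∑ k, ∑ i, v i * (A i k * z k) := Finset.sum_comm
        _ = ∑ k, (∑ i, v i * A i k) * z k := by
            refine Finset.sum_congr rfl fun k _ => ?_
            rw [Finset.sum_mul]
            exact Finset.sum_congr rfl fun i _ => by ring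
    rw [h1]
    calc ∑ k, (∑ i, v i * A i k) * z k ≤ en (fun k => ∑ i, v i * A i k) * en z :=
          cs _ _
      _ ≤ c * en v * en z := mul_le_mul_of_nonneg_right (hup v) (en_nonneg z)
  nlinarith [en_nonneg z]

/-- Bound on `A⁻ᵀ z` from the lower row-form bound, for triangular `A` with positive diagonal. -/
lemma inv_bound {D : ℕ} {A : Matrix (Fin D) (Fin D) ℝ} {c : ℝ} (hc : 0 < c)
    (htri : ∀ i j : Fin D, i < j → A i j = 0) (hdiag : ∀ i, 0 < A i i)
    (hlo : ∀ y : Fin D → ℝ, c * en y ≤ en (fun k => ∑ i, y i * A i k)) (z : Fin D → ℝ) :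
    en (fun i => ∑ k, A⁻¹ k i * z k) ≤ c⁻¹ * en z := by
  have hdet : A.det = ∏ i, A i i :=
    Matrix.det_of_lowerTriangular A (fun i j h => htri i j (by exact h))
  have hunit : IsUnit A.det := by
    rw [hdet]
    exact (IsUnit.mk0 _ (ne_of_gt (Finset.prod_pos fun i _ => hdiag i)))
  have hBA : A⁻¹ * A = 1 := Matrix.nonsing_inv_mul A hunit
  set y : Fin D → ℝ := fun i => ∑ k, A⁻¹ k i * z k with hy
  have hkey : (fun k => ∑ i, y i * A i k) = z := by
    funext k
    calc ∑ i, y i * A i k = ∑ i, ∑ j, z j * (A⁻¹ j i * A i k) := by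
          refine Finset.sum_congr rfl fun i _ => ?_
          simp only [hy]
          rw [Finset.sum_mul]
          exact Finset.sum_congr rfl fun j _ => by ring
      _ = ∑ j, ∑ i, z j * (A⁻¹ j i * A i k) := Finset.sum_comm
      _ = ∑ j, z j * (A⁻¹ * A) j k := by
          refine Finset.sum_congr rfl fun j _ => ?_
          rw [Matrix.mul_apply, Finset.mul_sum]
      _ = z k := by
          rw [hBA]
          simp [Matrix.one_apply]
  have h1 := hlo y
  rw [hkey] at h1
  have h2 := mul_le_mul_of_nonneg_left h1 (inv_nonneg.2 hc.le)
  calc en y = c⁻¹ * (c * en y) := by field_simp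
    _ ≤ c⁻¹ * en z := h2

theorem stmt11 (D : ℕ) (δ δ' α : ℝ) (hδ : 0 < δ) (hδδ : δ ≤ δ')
    (hα : α ∈ Set.Ioo (0:ℝ) 1) :
    ∃ c > 0, ∀ C : ℝ → Matrix (Fin D) (Fin D) ℝ, Continuous C → Ellip D δ δ' C →
      ∀ L : ℝ → ℝ → Matrix (Fin D) (Fin D) ℝ, IsCholesky C L →
      ∀ T ∈ Set.Ioc (0:ℝ) 1,
      ∀ f : ℝ → (Fin D → ℝ) → ℝ,
        (∃ M, ∀ s ∈ Set.Icc (0:ℝ) T, ∀ x, |f s x| ≤ M) →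
        ContinuousOn (fun p : ℝ × (Fin D → ℝ) => f p.1 p.2) (Set.Icc 0 T ×ˢ Set.univ) →
        BddAbove (psemiSet T α f) →
      ∀ t₁ t₂ : ℝ, 0 ≤ t₁ → t₁ < t₂ → t₂ ≤ T →
      ∀ y₁ : Fin D → ℝ, ∀ d : Fin D,
        |∫ s in t₁..t₂, ∫ z : Fin D → ℝ,
            (2 * Real.pi) ^ (-(D : ℝ) / 2) * Real.exp (-(∑ i, z i ^ 2) / 2) *
              (∑ k, (L t₁ s)⁻¹ k d * z k) *
              f s (fun i => y₁ i - ∑ k, L t₁ s i k * z k)| ≤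
          c * sSup (psemiSet T α f) * (t₂ - t₁) ^ ((1 + α) / 2) := by
  obtain ⟨hα0, hα1⟩ := hα
  have hδ' : 0 < δ' := lt_of_lt_of_le hδ hδδ
  set p : ℝ := (2 * Real.pi) ^ (-(D : ℝ) / 2) with hp
  have hp0 : 0 < p := Real.rpow_pos_of_pos (by positivity) _
  set G : ℝ := ∫ z : Fin D → ℝ, Real.exp (-(∑ i, z i ^ 2) / 2) * en z ^ (1 + α) with hG
  have hG0 : 0 ≤ G := MeasureTheory.integral_nonneg fun z =>
    mul_nonneg (Real.exp_nonneg _) (Real.rpow_nonneg (en_nonneg _) _)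
  set cA : ℝ := p * G * δ ^ (-(1:ℝ)/2) * δ' ^ (α/2) with hcA
  have hcA0 : 0 ≤ cA := by
    refine mul_nonneg (mul_nonneg (mul_nonneg hp0.le hG0) ?_) ?_
    · exact Real.rpow_nonneg hδ.le _
    · exact Real.rpow_nonneg hδ'.le _
  set c0 : ℝ := cA * (2 / (1 + α)) with hc0
  have hc00 : 0 ≤ c0 := mul_nonneg hcA0 (by positivity)
  refine ⟨c0 + 1, by linarith, ?_⟩
  intro C hC hE L hL T hT f hfb hfc hfB t₁ t₂ ht₁ ht₁₂ ht₂ y₁ d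
  obtain ⟨Mb, hMb⟩ := hfb
  obtain ⟨hT0, hT1⟩ := hT
  set M := sSup (psemiSet T α f) with hM
  have hM0 : 0 ≤ M := psemi_nonneg hT0 f hfB
  -- pointwise-in-s bound on the inner integral
  have inner_bound : ∀ s ∈ Set.Ioc t₁ t₂,
      |∫ z : Fin D → ℝ,
          p * Real.exp (-(∑ i, z i ^ 2) / 2) * (∑ k, (L t₁ s)⁻¹ k d * z k) *
            f s (fun i => y₁ i - ∑ k, L t₁ s i k * z k)| ≤
        cA * M * (s - t₁) ^ ((α - 1) / 2) := by
    intro s hs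
    have hst : t₁ < s := hs.1
    have hsT : s ∈ Set.Icc (0:ℝ) T := ⟨le_of_lt (lt_of_le_of_lt ht₁ hst), hs.2.trans ht₂⟩
    obtain ⟨htri, hdiag, hSAA⟩ := hL t₁ s ht₁ hst (le_trans (hs.2.trans ht₂) hT1)
    set A := L t₁ s with hA
    set Δ := s - t₁ with hΔdef
    have hΔ : 0 < Δ := sub_pos.2 hst
    -- row-form bounds
    have hrow : ∀ y : Fin D → ℝ,
        δ * Δ * (∑ i, y i ^ 2) ≤ ∑ k, (∑ i, y i * A i k) ^ 2 ∧
        (∑ k, (∑ i, y i * A i k) ^ 2) ≤ δ' * Δ * (∑ i, y i ^ 2) := by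
      intro y
      have h := sig_form hC hE ht₁ hst.le (le_trans (hs.2.trans ht₂) hT1) y
      rw [hSAA, quad_AAT] at h
      exact h
    have hup_en : ∀ y : Fin D → ℝ,
        en (fun k => ∑ i, y i * A i k) ≤ Real.sqrt (δ' * Δ) * en y := by
      intro y
      have h := (hrow y).2
      calc en (fun k => ∑ i, y i * A i k) = Real.sqrt (∑ k, (∑ i, y i * A i k) ^ 2) := rfl
        _ ≤ Real.sqrt (δ' * Δ * ∑ i, y i ^ 2) := Real.sqrt_le_sqrt h
        _ = Real.sqrt (δ' * Δ) * Real.sqrt (∑ i, y i ^ 2) :=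
            Real.sqrt_mul (mul_nonneg hδ'.le hΔ.le) _
        _ = Real.sqrt (δ' * Δ) * en y := rfl
    have hlo_en : ∀ y : Fin D → ℝ,
        Real.sqrt (δ * Δ) * en y ≤ en (fun k => ∑ i, y i * A i k) := by
      intro y
      have h := (hrow y).1
      calc Real.sqrt (δ * Δ) * en y = Real.sqrt (δ * Δ * ∑ i, y i ^ 2) :=
            (Real.sqrt_mul (mul_nonneg hδ.le hΔ.le) _).symm
        _ ≤ Real.sqrt (∑ k, (∑ i, y i * A i k) ^ 2) := Real.sqrt_le_sqrt h
        _ = en (fun k => ∑ i, y i * A i k) := rfl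
    have hsδΔ : 0 < Real.sqrt (δ * Δ) := Real.sqrt_pos.2 (mul_pos hδ hΔ)
    have hAz : ∀ z : Fin D → ℝ,
        en (fun i => ∑ k, A i k * z k) ≤ Real.sqrt (δ' * Δ) * en z :=
      opbound_of_rowbound (Real.sqrt_nonneg _) hup_en
    have hBd : ∀ z : Fin D → ℝ,
        |∑ k, A⁻¹ k d * z k| ≤ (Real.sqrt (δ * Δ))⁻¹ * en z := fun z =>
      le_trans (abs_le_en (fun i => ∑ k, A⁻¹ k i * z k) d)
        (inv_bound hsδΔ htri hdiag hlo_en z)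
    -- continuity of z ↦ f s (y₁ - A z)
    have hxcont : Continuous fun z : Fin D → ℝ => (fun i => y₁ i - ∑ k, A i k * z k) := by
      exact continuous_pi fun i => continuous_const.sub
        (continuous_finset_sum _ fun k _ => continuous_const.mul (continuous_apply k))
    have hcontf : Continuous fun z : Fin D → ℝ => f s (fun i => y₁ i - ∑ k, A i k * z k) := by
      have : Continuous fun z : Fin D → ℝ =>
          ((s, fun i => y₁ i - ∑ k, A i k * z k) : ℝ × (Fin D → ℝ)) :=
        continuous_const.prodMk hxcont
      exact hfc.comp_continuous this fun z => ⟨hsT, Set.mem_univ _⟩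
    -- the integrands
    set F : (Fin D → ℝ) → ℝ := fun z =>
      p * Real.exp (-(∑ i, z i ^ 2) / 2) * (∑ k, A⁻¹ k d * z k) *
        f s (fun i => y₁ i - ∑ k, A i k * z k) with hF
    set F₂ : (Fin D → ℝ) → ℝ := fun z =>
      p * Real.exp (-(∑ i, z i ^ 2) / 2) * (∑ k, A⁻¹ k d * z k) * f s y₁ with hF₂
    have hgauss1 : Integrable (fun z : Fin D → ℝ =>
        Real.exp (-(∑ i, z i ^ 2) / 2) * en z ^ (1:ℝ)) :=
      gauss_integrable (by norm_num) (by norm_num)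
    have hgauss1α : Integrable (fun z : Fin D → ℝ =>
        Real.exp (-(∑ i, z i ^ 2) / 2) * en z ^ (1 + α)) :=
      gauss_integrable (by linarith) (by linarith)
    have hMb0 : 0 ≤ Mb := le_trans (abs_nonneg _) (hMb s hsT y₁)
    -- common majorant computation
    have hmaj : ∀ (z : Fin D → ℝ) (v : ℝ), |v| ≤ Mb →
        |p * Real.exp (-(∑ i, z i ^ 2) / 2) * (∑ k, A⁻¹ k d * z k) * v| ≤
          p * (Real.sqrt (δ * Δ))⁻¹ * Mb * (Real.exp (-(∑ i, z i ^ 2) / 2) * en z ^ (1:ℝ)) := by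
      intro z v hv
      rw [abs_mul, abs_mul, abs_mul, abs_of_pos hp0,
        abs_of_pos (Real.exp_pos _), Real.rpow_one]
      calc p * Real.exp (-(∑ i, z i ^ 2) / 2) * |∑ k, A⁻¹ k d * z k| * |v| ≤
          p * Real.exp (-(∑ i, z i ^ 2) / 2) * ((Real.sqrt (δ * Δ))⁻¹ * en z) * Mb := by
            refine mul_le_mul ?_ hv (abs_nonneg _) ?_
            · exact mul_le_mul_of_nonneg_left (hBd z)
                (mul_nonneg hp0.le (Real.exp_nonneg _))
            · exact mul_nonneg (mul_nonneg hp0.le (Real.exp_nonneg _))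
                (mul_nonneg (inv_nonneg.2 (Real.sqrt_nonneg _)) (en_nonneg _))
        _ = p * (Real.sqrt (δ * Δ))⁻¹ * Mb * (Real.exp (-(∑ i, z i ^ 2) / 2) * en z) := by
            ring
    have hFint : Integrable F := by
      refine (hgauss1.const_mul (p * (Real.sqrt (δ * Δ))⁻¹ * Mb)).mono' ?_ ?_
      · refine Continuous.aestronglyMeasurable ?_
        refine ((continuous_const.mul (Real.continuous_exp.comp ?_)).mul
          (continuous_finset_sum _ fun k _ => continuous_const.mul (continuous_apply k))).mul hcontf
        exact (continuous_finset_sum _ fun i _ => (continuous_apply i).pow 2).neg.div_const 2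
      · exact Filter.Eventually.of_forall fun z => by
          rw [Real.norm_eq_abs]
          exact hmaj z _ (hMb s hsT _)
    have hF2int : Integrable F₂ := by
      refine (hgauss1.const_mul (p * (Real.sqrt (δ * Δ))⁻¹ * Mb)).mono' ?_ ?_
      · refine Continuous.aestronglyMeasurable ?_
        refine ((continuous_const.mul (Real.continuous_exp.comp ?_)).mul
          (continuous_finset_sum _ fun k _ => continuous_const.mul (continuous_apply k))).mul
          continuous_const
        exact (continuous_finset_sum _ fun i _ => (continuous_apply i).pow 2).neg.div_const 2
      · exact Filter.Eventually.of_forall fun z => by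
          rw [Real.norm_eq_abs]
          exact hmaj z _ (hMb s hsT _)
    have hF2zero : ∫ z, F₂ z = 0 := by
      have heq : F₂ = fun z => (p * f s y₁) *
          (Real.exp (-(∑ i, z i ^ 2) / 2) * (∑ k, A⁻¹ k d * z k)) := by
        funext z; simp only [hF₂]; ring
      rw [heq, MeasureTheory.integral_const_mul, gauss_odd (fun k => A⁻¹ k d), mul_zero]
    have hsplit : ∫ z, F z = ∫ z, (F z - F₂ z) := by
      rw [MeasureTheory.integral_sub hFint hF2int, hF2zero, sub_zero]
    -- pointwise bound on F - F₂
    set Ks : ℝ := p * (Real.sqrt (δ * Δ))⁻¹ * (Real.sqrt (δ' * Δ)) ^ α * M with hKs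
    have hKs0 : 0 ≤ Ks := mul_nonneg (mul_nonneg (mul_nonneg hp0.le
      (inv_nonneg.2 (Real.sqrt_nonneg _))) (Real.rpow_nonneg (Real.sqrt_nonneg _) _)) hM0
    have hptw : ∀ z : Fin D → ℝ, |F z - F₂ z| ≤
        Ks * (Real.exp (-(∑ i, z i ^ 2) / 2) * en z ^ (1 + α)) := by
      intro z
      have hdiff : F z - F₂ z = p * Real.exp (-(∑ i, z i ^ 2) / 2) * (∑ k, A⁻¹ k d * z k) *
          (f s (fun i => y₁ i - ∑ k, A i k * z k) - f s y₁) := by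
        simp only [hF, hF₂]; ring
      have hf_diff : |f s (fun i => y₁ i - ∑ k, A i k * z k) - f s y₁| ≤
          M * (Real.sqrt (δ' * Δ) * en z) ^ α := by
        refine le_trans (holder_space hT0 hα0 f hfB hsT _ _) ?_
        refine mul_le_mul_of_nonneg_left ?_ hM0
        refine Real.rpow_le_rpow (en_nonneg _) ?_ hα0.le
        have : ((fun i => y₁ i - ∑ k, A i k * z k) - y₁) = fun i => -(∑ k, A i k * z k) := by
          funext i; simp [Pi.sub_apply]
        rw [this, en_neg (fun i => ∑ k, A i k * z k)]
        exact hAz z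
      rw [hdiff, abs_mul, abs_mul, abs_mul, abs_of_pos hp0, abs_of_pos (Real.exp_pos _)]
      calc p * Real.exp (-(∑ i, z i ^ 2) / 2) * |∑ k, A⁻¹ k d * z k| *
            |f s (fun i => y₁ i - ∑ k, A i k * z k) - f s y₁| ≤
          p * Real.exp (-(∑ i, z i ^ 2) / 2) * ((Real.sqrt (δ * Δ))⁻¹ * en z) *
            (M * (Real.sqrt (δ' * Δ) * en z) ^ α) := by
            refine mul_le_mul ?_ hf_diff (abs_nonneg _) ?_
            · exact mul_le_mul_of_nonneg_left (hBd z)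
                (mul_nonneg hp0.le (Real.exp_nonneg _))
            · exact mul_nonneg (mul_nonneg hp0.le (Real.exp_nonneg _))
                (mul_nonneg (inv_nonneg.2 (Real.sqrt_nonneg _)) (en_nonneg _))
        _ = Ks * (Real.exp (-(∑ i, z i ^ 2) / 2) * (en z * en z ^ α)) := by
            rw [Real.mul_rpow (Real.sqrt_nonneg _) (en_nonneg _)]
            simp only [hKs]; ring
        _ = Ks * (Real.exp (-(∑ i, z i ^ 2) / 2) * en z ^ (1 + α)) := by
            rw [Real.rpow_add' (en_nonneg z) (by linarith), Real.rpow_one]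
    -- conclude the inner bound
    have hbnd : |∫ z, F z| ≤ Ks * G := by
      rw [hsplit]
      have := MeasureTheory.norm_integral_le_of_norm_le (hgauss1α.const_mul Ks)
        (Filter.Eventually.of_forall fun z => by rw [Real.norm_eq_abs]; exact hptw z)
      rw [MeasureTheory.integral_const_mul] at this
      rw [← Real.norm_eq_abs]
      exact this
    -- rewrite Ks * G as cA * M * Δ ^ ((α-1)/2)
    have hKsG : Ks * G = cA * M * Δ ^ ((α - 1) / 2) := by
      have h1 : (Real.sqrt (δ * Δ))⁻¹ = δ ^ (-(1:ℝ)/2) * Δ ^ (-(1:ℝ)/2) := by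
        rw [show (-(1:ℝ)/2) = -(1/2:ℝ) by norm_num, Real.rpow_neg hδ.le, Real.rpow_neg hΔ.le,
          ← mul_inv, ← Real.mul_rpow hδ.le hΔ.le, ← Real.sqrt_eq_rpow]
      have h2 : Real.sqrt (δ' * Δ) ^ α = δ' ^ (α/2) * Δ ^ (α/2) := by
        rw [Real.sqrt_eq_rpow, ← Real.rpow_mul (mul_nonneg hδ'.le hΔ.le),
          show (1/2) * α = α/2 by ring, Real.mul_rpow hδ'.le hΔ.le]
      have h3 : Δ ^ (-(1:ℝ)/2) * Δ ^ (α/2) = Δ ^ ((α - 1)/2) := by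
        rw [← Real.rpow_add hΔ]
        congr 1; ring
      simp only [hKs, hcA, h1, h2]
      calc p * (δ ^ (-(1:ℝ)/2) * Δ ^ (-(1:ℝ)/2)) * (δ' ^ (α/2) * Δ ^ (α/2)) * M * G
          = p * G * δ ^ (-(1:ℝ)/2) * δ' ^ (α/2) * M * (Δ ^ (-(1:ℝ)/2) * Δ ^ (α/2)) := by ring
        _ = p * G * δ ^ (-(1:ℝ)/2) * δ' ^ (α/2) * M * Δ ^ ((α - 1)/2) := by rw [h3]
    rw [← hKsG]
    exact hbnd
  -- outer integration
  have hr : (-1:ℝ) < (α - 1) / 2 := by linarith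
  have hintbase : IntervalIntegrable (fun u : ℝ => u ^ ((α - 1)/2)) MeasureTheory.volume 0 (t₂ - t₁) :=
    intervalIntegral.intervalIntegrable_rpow' hr
  have hintshift : IntervalIntegrable (fun s : ℝ => (s - t₁) ^ ((α - 1)/2))
      MeasureTheory.volume t₁ t₂ := by
    have := hintbase.comp_sub_right t₁
    rwa [zero_add, sub_add_cancel] at this
  have hint : IntervalIntegrable (fun s : ℝ => cA * M * (s - t₁) ^ ((α - 1)/2))
      MeasureTheory.volume t₁ t₂ := hintshift.const_mul _
  have hae : ∀ᵐ s ∂(MeasureTheory.volume.restrict (Set.uIoc t₁ t₂)),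
      ‖∫ z : Fin D → ℝ,
          p * Real.exp (-(∑ i, z i ^ 2) / 2) * (∑ k, (L t₁ s)⁻¹ k d * z k) *
            f s (fun i => y₁ i - ∑ k, L t₁ s i k * z k)‖ ≤
        cA * M * (s - t₁) ^ ((α - 1) / 2) := by
    rw [Set.uIoc_of_le ht₁₂.le]
    refine (MeasureTheory.ae_restrict_iff' measurableSet_Ioc).2
      (Filter.Eventually.of_forall fun s hs => ?_)
    rw [Real.norm_eq_abs]
    exact inner_bound s hs
  have houter := intervalIntegral.norm_integral_le_abs_of_norm_le hae hint
  rw [Real.norm_eq_abs] at houter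
  -- compute the bound integral
  have hvalue : ∫ s in t₁..t₂, cA * M * (s - t₁) ^ ((α - 1)/2) =
      cA * M * (2 / (1 + α)) * (t₂ - t₁) ^ ((1 + α)/2) := by
    rw [intervalIntegral.integral_const_mul]
    have h1 : ∫ s in t₁..t₂, (s - t₁) ^ ((α - 1)/2) =
        ∫ u in (t₁ - t₁)..(t₂ - t₁), u ^ ((α - 1)/2) :=
      intervalIntegral.integral_comp_sub_right (fun u => u ^ ((α - 1)/2)) t₁
    have hne : ((α - 1)/2 + 1 : ℝ) ≠ 0 := by
      rw [show ((α - 1)/2 + 1 : ℝ) = (1 + α)/2 by ring]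
      positivity
    rw [h1, sub_self, integral_rpow (Or.inl hr), Real.zero_rpow hne, sub_zero,
      show (α - 1)/2 + 1 = (1 + α)/2 by ring]
    have h2 : (t₂ - t₁) ^ ((1 + α)/2) / ((1 + α)/2) =
        (2 / (1 + α)) * (t₂ - t₁) ^ ((1 + α)/2) := by
      rw [div_div_eq_mul_div, div_eq_mul_inv, div_eq_mul_inv]
      ring
    rw [h2]
    ring
  have hP0 : (0:ℝ) ≤ (t₂ - t₁) ^ ((1 + α)/2) := Real.rpow_nonneg (by linarith) _
  calc |∫ s in t₁..t₂, ∫ z : Fin D → ℝ,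
          p * Real.exp (-(∑ i, z i ^ 2) / 2) * (∑ k, (L t₁ s)⁻¹ k d * z k) *
            f s (fun i => y₁ i - ∑ k, L t₁ s i k * z k)|
      ≤ |∫ s in t₁..t₂, cA * M * (s - t₁) ^ ((α - 1)/2)| := houter
    _ = cA * M * (2 / (1 + α)) * (t₂ - t₁) ^ ((1 + α)/2) := by
        rw [hvalue]
        exact abs_of_nonneg (mul_nonneg (mul_nonneg (mul_nonneg hcA0 hM0)
          (by positivity)) hP0)
    _ = c0 * M * (t₂ - t₁) ^ ((1 + α)/2) := by rw [hc0]; ring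
    _ ≤ (c0 + 1) * M * (t₂ - t₁) ^ ((1 + α)/2) := by nlinarith
end
end
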